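/- arXiv:1401.2398 — 8 statements merged into one kernel-verified Lean document; each statement's English description precedes it below -/
import Mathlib

section
/- Let M ≥ 2, let v_1, …, v_M and f be unit vectors in a complex inner product space, and let c > 0 satisfy |⟨v_i, f⟩|² ≥ c for all i = 1, …, M. Then max over pairs i ≠ j of |⟨v_i, v_j⟩| is at least (M·c − 1)/(M − 1). -/
/-!
Let `t` be the largest `|⟨v i, v j⟩|` with `i ≠ j`. The Gram matrix of the `v i` has unit
diagonal and off-diagonal entries of modulus at most `t`, so the synthesis map `z ↦ ∑ zᵢ vᵢ`
satisfies `‖∑ zᵢ vᵢ‖² ≤ (1 + (M - 1) t) ∑ |zᵢ|²`. Testing against `z = (⟨vᵢ, f⟩)ᵢ` gives the dual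
(Bessel) bound `∑ |⟨vᵢ, f⟩|² ≤ 1 + (M - 1) t`, whose left side is at least `M c`.
-/

open Finset

theorem sum_sum_mul_mul_le_of_offDiag_le {ι : Type*} [Fintype ι] (a : ι → ℝ)
    (ha : ∀ i, 0 ≤ a i) (g : ι → ι → ℝ) (hg : ∀ i, g i i = 1) {t : ℝ} (ht : 0 ≤ t) (hgt : ∀ i j, i ≠ j → g i j ≤ t) :
    ∑ i, ∑ j, a i * a j * g i j ≤ (1 + (Fintype.card ι - 1) * t) * ∑ i, a i ^ 2 := by
  classical
  -- `g i j ≤ t + (1 - t) δᵢⱼ` turns the form into `t (∑ a)² + (1 - t) ∑ a²`.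
  calc ∑ i, ∑ j, a i * a j * g i j
      ≤ ∑ i, ∑ j, a i * a j * (t + if i = j then 1 - t else 0) := by
        gcongr with i _ j _
        · exact mul_nonneg (ha i) (ha j)
        · split_ifs with hij
          · subst hij; simp [hg]
          · simpa using hgt i j hij
    _ = t * (∑ i, a i) ^ 2 + (1 - t) * ∑ i, a i ^ 2 := by
        simp only [mul_add, sum_add_distrib, mul_ite, mul_zero, sum_ite_eq, mem_univ, if_true,
          ← sum_mul, ← mul_sum, sq]
        ring
    _ ≤ t * (Fintype.card ι * ∑ i, a i ^ 2) + (1 - t) * ∑ i, a i ^ 2 := by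
        gcongr
        exact sq_sum_le_card_mul_sum_sq
    _ = (1 + (Fintype.card ι - 1) * t) * ∑ i, a i ^ 2 := by ring

section
variable {𝕜 E ι : Type*} [RCLike 𝕜] [NormedAddCommGroup E] [InnerProductSpace 𝕜 E] [Fintype ι]

theorem norm_sum_smul_sq_le_sum_sum (v : ι → E) (z : ι → 𝕜) :
    ‖∑ i, z i • v i‖ ^ 2 ≤ ∑ i, ∑ j, ‖z i‖ * ‖z j‖ * ‖(inner 𝕜 (v i) (v j) : 𝕜)‖ := by
  calc ‖∑ i, z i • v i‖ ^ 2
      = RCLike.re (inner 𝕜 (∑ i, z i • v i) (∑ j, z j • v j) : 𝕜) :=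
        (inner_self_eq_norm_sq (𝕜 := 𝕜) _).symm
    _ ≤ ‖(inner 𝕜 (∑ i, z i • v i) (∑ j, z j • v j) : 𝕜)‖ := RCLike.re_le_norm _
    _ = ‖∑ i, ∑ j, (starRingEnd 𝕜) (z i) * z j * inner 𝕜 (v i) (v j)‖ := by
        rw [sum_inner]
        refine congrArg _ (sum_congr rfl fun i _ => ?_)
        rw [inner_smul_left, inner_sum, mul_sum]
        refine sum_congr rfl fun j _ => ?_
        rw [inner_smul_right, mul_assoc]
    _ ≤ ∑ i, ∑ j, ‖(starRingEnd 𝕜) (z i) * z j * inner 𝕜 (v i) (v j)‖ :=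
        (norm_sum_le _ _).trans (sum_le_sum fun i _ => norm_sum_le _ _)
    _ = ∑ i, ∑ j, ‖z i‖ * ‖z j‖ * ‖(inner 𝕜 (v i) (v j) : 𝕜)‖ := by
        simp only [norm_mul, RCLike.norm_conj]

theorem norm_sum_smul_sq_le_of_norm_inner_le (v : ι → E) (hv : ∀ i, ‖v i‖ = 1) {t : ℝ}
    (ht : 0 ≤ t) (hvt : ∀ i j, i ≠ j → ‖(inner 𝕜 (v i) (v j) : 𝕜)‖ ≤ t) (z : ι → 𝕜) :
    ‖∑ i, z i • v i‖ ^ 2 ≤ (1 + (Fintype.card ι - 1) * t) * ∑ i, ‖z i‖ ^ 2 :=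
  (norm_sum_smul_sq_le_sum_sum v z).trans <|
    sum_sum_mul_mul_le_of_offDiag_le _ (fun _ => norm_nonneg _) _
      (fun i => by simp [inner_self_eq_norm_sq_to_K, hv i]) ht hvt

theorem sum_norm_inner_sq_le_of_norm_sum_smul_sq_le (v : ι → E) {K : ℝ} (hK : 0 ≤ K)
    (hvK : ∀ z : ι → 𝕜, ‖∑ i, z i • v i‖ ^ 2 ≤ K * ∑ i, ‖z i‖ ^ 2) (f : E) :
    ∑ i, ‖(inner 𝕜 (v i) f : 𝕜)‖ ^ 2 ≤ K * ‖f‖ ^ 2 := by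
  set C := ∑ i, ‖(inner 𝕜 (v i) f : 𝕜)‖ ^ 2 with hC
  set s := ∑ i, (inner 𝕜 (v i) f : 𝕜) • v i with hs
  have hfs : (inner 𝕜 f s : 𝕜) = C := by
    rw [hs, inner_sum, hC]
    push_cast
    refine sum_congr rfl fun i _ => ?_
    rw [inner_smul_right, ← inner_conj_symm f (v i), RCLike.mul_conj]
  have hCs : C ≤ ‖f‖ * ‖s‖ := by
    simpa [hfs, abs_of_nonneg (by positivity : 0 ≤ C)] using norm_inner_le_norm (𝕜 := 𝕜) f s
  rcases (show 0 ≤ C by positivity).eq_or_lt with hC0 | hCpos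
  · rw [← hC0]; positivity
  refine le_of_mul_le_mul_right ?_ hCpos
  calc C * C ≤ (‖f‖ * ‖s‖) ^ 2 := by rw [sq]; gcongr
    _ = ‖f‖ ^ 2 * ‖s‖ ^ 2 := mul_pow _ _ _
    _ ≤ ‖f‖ ^ 2 * (K * C) := by gcongr; exact hvK _
    _ = K * ‖f‖ ^ 2 * C := by ring

end

theorem stmt0_general {E : Type*} [NormedAddCommGroup E] [InnerProductSpace ℂ E]
    (M : ℕ) (hM : 2 ≤ M) (v : Fin M → E) (f : E) (c : ℝ)
    (hv : ∀ i, ‖v i‖ = 1) (hf : ‖f‖ = 1)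
    (hvf : ∀ i, c ≤ ‖(inner ℂ (v i) f : ℂ)‖ ^ 2) :
    ∃ i j, i ≠ j ∧ ((M : ℝ) * c - 1) / ((M : ℝ) - 1) ≤ ‖(inner ℂ (v i) (v j) : ℂ)‖ := by
  have hpairs : (univ.offDiag : Finset (Fin M × Fin M)).Nonempty :=
    ⟨(⟨0, by omega⟩, ⟨1, by omega⟩), by simp [Fin.ext_iff]⟩
  obtain ⟨⟨i, j⟩, hij, hmax⟩ :=
    exists_max_image univ.offDiag (fun p => ‖(inner ℂ (v p.1) (v p.2) : ℂ)‖) hpairs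
  set t := ‖(inner ℂ (v i) (v j) : ℂ)‖
  have hM1 : (0 : ℝ) < M - 1 := by
    have : (2 : ℝ) ≤ M := by exact_mod_cast hM
    linarith
  have hgram := norm_sum_smul_sq_le_of_norm_inner_le v hv (norm_nonneg _ : 0 ≤ t)
    fun k l hkl => hmax (k, l) (by simpa using hkl)
  rw [Fintype.card_fin] at hgram
  have hbessel := sum_norm_inner_sq_le_of_norm_sum_smul_sq_le v
    (add_nonneg zero_le_one (mul_nonneg hM1.le (norm_nonneg _ : 0 ≤ t))) hgram f
  have hc : (M : ℝ) * c ≤ ∑ k, ‖(inner ℂ (v k) f : ℂ)‖ ^ 2 := by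
    simpa using sum_le_sum fun k (_ : k ∈ univ) => hvf k
  refine ⟨i, j, by simpa using hij, ?_⟩
  rw [hf, one_pow, mul_one] at hbessel
  rw [div_le_iff₀ hM1]
  linarith

/-- Lemma 2 (spherical codes): if `M ≥ 2` unit vectors `v i` all satisfy
`|⟨v i, f⟩|² ≥ c > 0` for a unit vector `f`, then some pair `i ≠ j` has
`|⟨v i, v j⟩| ≥ (Mc − 1)/(M − 1)`. -/
theorem stmt0 {E : Type*} [NormedAddCommGroup E] [InnerProductSpace ℂ E]
    (M : ℕ) (hM : 2 ≤ M) (v : Fin M → E) (f : E) (c : ℝ) (hc : 0 < c)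
    (hv : ∀ i, ‖v i‖ = 1) (hf : ‖f‖ = 1)
    (hvf : ∀ i, c ≤ ‖(inner ℂ (v i) f : ℂ)‖ ^ 2) :
    ∃ i j, i ≠ j ∧ ((M : ℝ) * c - 1) / ((M : ℝ) - 1) ≤ ‖(inner ℂ (v i) (v j) : ℂ)‖ :=
  stmt0_general M hM v f c hv hf hvf
end

section
/- Let ρ ≥ 1, let {ψ̃_x}_{x ∈ X} be an orthonormal representation of degree ρ of the channel in a finite-dimensional complex inner product space, and let f be a unit vector in that space. Let n ≥ 1, let k : X → ℕ satisfy ∑_a k(a) = n, and let θ ∈ ℝ satisfy ∏_{a ∈ X} |⟨ψ̃_a, f⟩|^{2·k(a)} ≥ e^{−nθ}. Let M ≥ 2 and let c_1, …, c_M ∈ X^n be codewords each of composition k, and assume M·e^{−nθ} ≥ 1. Then max over pairs m ≠ m' of ∏_{i=1}^n ⟨ψ_{c_m(i)}, ψ_{c_{m'}(i)}⟩ is at least ((M·e^{−nθ} − 1)/(M − 1))^ρ. -/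
/-!
Let `V_m = ψ̃_{c_m(1)} ⊗ ⋯ ⊗ ψ̃_{c_m(n)}` and `G = f ⊗ ⋯ ⊗ f`. Instead of building tensor
products we only need vectors with these Gram entries, which exist because an entrywise product
of Gram matrices is positive semidefinite (Schur product theorem). Since every codeword has
composition `k`, `|⟨V_m, G⟩|² = ∏_a |⟨ψ̃_a, f⟩|^{2 k(a)} ≥ e^{-nθ}`, while off the diagonal
`|⟨V_m, V_{m'}⟩| ≤ (∏_i B(c_m(i), c_{m'}(i)))^{1/ρ} =: γ`, where `B` is the Bhattacharyya
coefficient. Aligning the phases of the `V_m` against `G` and applying Cauchy–Schwarz gives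
`(M e^{-nθ/2})² ≤ ‖∑_m a_m V_m‖² ≤ M + M (M - 1) γ`, i.e. `γ ≥ (M e^{-nθ} - 1)/(M - 1)`.
-/

open Finset Matrix
open scoped InnerProductSpace ComplexConjugate ComplexOrder MatrixOrder

section Gram

variable {𝕜 E : Type*} [RCLike 𝕜] [SeminormedAddCommGroup E] [InnerProductSpace 𝕜 E]

theorem norm_eq_one_iff_inner_self_eq_one (x : E) : ‖x‖ = 1 ↔ ⟪x, x⟫_𝕜 = 1 := by
  rw [inner_self_eq_norm_sq_to_K]
  norm_cast
  exact (pow_eq_one_iff_of_nonneg (norm_nonneg x) two_ne_zero).symm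

theorem Matrix.posSemidef_of_prod_inner {J ι : Type*} [Finite J] (s : Finset ι)
    (u : J → ι → E) : (Matrix.of fun j k => ∏ i ∈ s, ⟪u j i, u k i⟫_𝕜).PosSemidef := by
  classical
  induction s using Finset.induction_on with
  | empty =>
    convert posSemidef_gram 𝕜 fun _ : J => (1 : 𝕜) using 1
    ext j k
    simp
  | insert i s hi ih =>
    convert (posSemidef_gram 𝕜 fun j => u j i).hadamard ih using 1
    ext j k
    simp [prod_insert hi]

theorem Matrix.PosSemidef.exists_eq_gram {n : Type*} [Fintype n] {A : Matrix n n 𝕜}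
    (hA : A.PosSemidef) : ∃ v : n → EuclideanSpace 𝕜 n, A = gram 𝕜 v := by
  classical
  obtain ⟨X, hX, -, rfl⟩ :=
    CFC.exists_sqrt_of_isSelfAdjoint_of_quasispectrumRestricts hA.isHermitian
      (QuasispectrumRestricts.nnreal_of_nonneg hA.nonneg)
  refine ⟨fun j => WithLp.toLp 2 fun l => X l j, ?_⟩
  nth_rw 1 [← hX.star_eq]
  ext j k
  simp [Matrix.mul_apply, PiLp.inner_apply, mul_comm]

theorem exists_inner_eq_prod_inner {J ι : Type*} [Fintype J] [Fintype ι] (u : J → ι → E) :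
    ∃ V : J → EuclideanSpace 𝕜 J, ∀ j k, ⟪V j, V k⟫_𝕜 = ∏ i, ⟪u j i, u k i⟫_𝕜 := by
  obtain ⟨V, hV⟩ := (posSemidef_of_prod_inner (𝕜 := 𝕜) univ u).exists_eq_gram
  exact ⟨V, fun j k => by simpa using (congrFun₂ hV j k).symm⟩

theorem exists_unit_vectors_inner_eq_prod_inner {J ι : Type*} [Fintype J] [Fintype ι]
    {u : J → ι → E} {w : ι → E} (hu : ∀ j i, ‖u j i‖ = 1) (hw : ∀ i, ‖w i‖ = 1) :
    ∃ (V : J → EuclideanSpace 𝕜 (Option J)) (G : EuclideanSpace 𝕜 (Option J)),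
      (∀ j, ‖V j‖ = 1) ∧ ‖G‖ = 1 ∧ (∀ j, ⟪V j, G⟫_𝕜 = ∏ i, ⟪u j i, w i⟫_𝕜) ∧
      ∀ j k, ⟪V j, V k⟫_𝕜 = ∏ i, ⟪u j i, u k i⟫_𝕜 := by
  obtain ⟨V, hV⟩ := exists_inner_eq_prod_inner (𝕜 := 𝕜)
    fun (j : Option J) i => j.elim (w i) fun j => u j i
  have hV_norm : ∀ j, ‖V j‖ = 1 := fun j => by
    rw [norm_eq_one_iff_inner_self_eq_one (𝕜 := 𝕜), hV]
    refine prod_eq_one fun i _ => (norm_eq_one_iff_inner_self_eq_one _).1 ?_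
    cases j <;> simp [hu, hw]
  exact ⟨fun j => V (some j), V none, fun j => hV_norm _, hV_norm none, fun j => hV _ _,
    fun j k => hV _ _⟩

end Gram

section PhaseAlignment

variable {𝕜 F : Type*} [RCLike 𝕜] [SeminormedAddCommGroup F] [InnerProductSpace 𝕜 F]

theorem sq_sum_norm_inner_le {ι : Type*} [Fintype ι] (v : ι → F) (g : F) :
    (∑ m, ‖⟪v m, g⟫_𝕜‖) ^ 2 ≤ ‖g‖ ^ 2 * ∑ m, ∑ m', ‖⟪v m, v m'⟫_𝕜‖ := by
  set z : ι → 𝕜 := fun m => ⟪v m, g⟫_𝕜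
  -- the phase of `z m`; the junk value `0 / 0 = 0` makes `haz` hold also when `z m = 0`
  set a : ι → 𝕜 := fun m => z m / (‖z m‖ : 𝕜)
  have ha : ∀ m, ‖a m‖ ≤ 1 := fun m => by
    simpa [a, norm_div] using div_self_le_one ‖z m‖
  have haz : ∀ m, conj (a m) * z m = (‖z m‖ : 𝕜) := fun m => by
    rcases eq_or_ne ‖z m‖ 0 with h | h
    · simp [a, h]
    · rw [map_div₀, RCLike.conj_ofReal, div_mul_eq_mul_div, RCLike.conj_mul, sq,
        mul_div_assoc, div_self (by exact_mod_cast h), mul_one]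
  set w := ∑ m, a m • v m
  have hwg : ∑ m, ‖z m‖ ≤ ‖w‖ * ‖g‖ := by
    have : ⟪w, g⟫_𝕜 = ((∑ m, ‖z m‖ : ℝ) : 𝕜) := by
      simp [w, sum_inner, inner_smul_left, haz, z]
    calc ∑ m, ‖z m‖ ≤ ‖⟪w, g⟫_𝕜‖ := by rw [this, RCLike.norm_ofReal]; exact le_abs_self _
      _ ≤ ‖w‖ * ‖g‖ := norm_inner_le_norm w g
  have hww : ‖w‖ ^ 2 ≤ ∑ m, ∑ m', ‖⟪v m, v m'⟫_𝕜‖ := by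
    have : ⟪w, w⟫_𝕜 = ∑ m, ∑ m', conj (a m) * a m' * ⟪v m, v m'⟫_𝕜 := by
      simp_rw [w, sum_inner, inner_smul_left, inner_sum, inner_smul_right, mul_sum, mul_assoc]
    calc ‖w‖ ^ 2 = ‖⟪w, w⟫_𝕜‖ := by
          rw [inner_self_eq_norm_sq_to_K, norm_pow, RCLike.norm_ofReal, abs_norm]
      _ ≤ ∑ m, ∑ m', ‖conj (a m) * a m' * ⟪v m, v m'⟫_𝕜‖ := by
        rw [this]; exact (norm_sum_le _ _).trans (sum_le_sum fun m _ => norm_sum_le _ _)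
      _ ≤ ∑ m, ∑ m', ‖⟪v m, v m'⟫_𝕜‖ := by
        gcongr with m _ m' _
        rw [norm_mul, norm_mul, RCLike.norm_conj]
        exact mul_le_of_le_one_left (norm_nonneg _) (mul_le_one₀ (ha m) (norm_nonneg _) (ha m'))
  calc (∑ m, ‖z m‖) ^ 2 ≤ (‖w‖ * ‖g‖) ^ 2 := by gcongr
    _ = ‖g‖ ^ 2 * ‖w‖ ^ 2 := by ring
    _ ≤ _ := by gcongr

theorem card_mul_le_of_norm_inner_le {ι : Type*} [Fintype ι] [Nonempty ι] {v : ι → F} {g : F}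
    (hv : ∀ m, ‖v m‖ = 1) (hg : ‖g‖ = 1) {ε γ : ℝ} (hε : ∀ m, ε ≤ ‖⟪v m, g⟫_𝕜‖ ^ 2)
    (hγ : ∀ m m', m ≠ m' → ‖⟪v m, v m'⟫_𝕜‖ ≤ γ) :
    Fintype.card ι * ε ≤ 1 + (Fintype.card ι - 1) * γ := by
  classical
  set N : ℝ := (Fintype.card ι : ℝ)
  have hN : 0 < N := by positivity
  have hlow : N ^ 2 * ε ≤ (∑ m, ‖⟪v m, g⟫_𝕜‖) ^ 2 := by
    have hsum : N * √ε ≤ ∑ m, ‖⟪v m, g⟫_𝕜‖ := by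
      simpa [N] using card_nsmul_le_sum univ _ _ fun m _ =>
        (Real.sqrt_le_sqrt (hε m)).trans_eq (Real.sqrt_sq (norm_nonneg _))
    have hε_le : ε ≤ √ε ^ 2 := by
      rcases le_total 0 ε with h | h
      · rw [Real.sq_sqrt h]
      · exact h.trans (sq_nonneg _)
    calc N ^ 2 * ε ≤ (N * √ε) ^ 2 := by rw [mul_pow]; gcongr
      _ ≤ _ := by gcongr
  have hrow : ∀ m, ∑ m', ‖⟪v m, v m'⟫_𝕜‖ ≤ 1 + (N - 1) * γ := fun m => by
    rw [← add_sum_erase _ _ (mem_univ m), inner_self_eq_norm_sq_to_K, hv, RCLike.ofReal_one,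
      one_pow, norm_one]
    gcongr
    calc ∑ m' ∈ univ.erase m, ‖⟪v m, v m'⟫_𝕜‖ ≤ ∑ m' ∈ univ.erase m, γ :=
          sum_le_sum fun m' hm' => hγ m m' (ne_of_mem_erase hm').symm
      _ = (N - 1) * γ := by
          rw [sum_const, card_erase_of_mem (mem_univ m), card_univ, nsmul_eq_mul,
            Nat.cast_pred Fintype.card_pos]
  have hupp : (∑ m, ‖⟪v m, g⟫_𝕜‖) ^ 2 ≤ N * (1 + (N - 1) * γ) := by
    calc (∑ m, ‖⟪v m, g⟫_𝕜‖) ^ 2 ≤ ‖g‖ ^ 2 * ∑ m, ∑ m', ‖⟪v m, v m'⟫_𝕜‖ :=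
          sq_sum_norm_inner_le v g
      _ ≤ ∑ _m : ι, (1 + (N - 1) * γ) := by
          rw [hg, one_pow, one_mul]; exact sum_le_sum fun m _ => hrow m
      _ = N * (1 + (N - 1) * γ) := by rw [sum_const, card_univ, nsmul_eq_mul]
  nlinarith [hlow.trans hupp]

end PhaseAlignment

section Channel

variable {X Y : Type*} [Fintype Y]

noncomputable def bhattacharyya (W : X → Y → ℝ) (x x' : X) : ℝ := ∑ y, √(W x y * W x' y)

theorem bhattacharyya_nonneg (W : X → Y → ℝ) (x x' : X) : 0 ≤ bhattacharyya W x x' :=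
  sum_nonneg fun _ _ => Real.sqrt_nonneg _

theorem one_le_bhattacharyya_self {W : X → Y → ℝ} {x : X} (hW1 : ∑ y, W x y = 1) :
    1 ≤ bhattacharyya W x x := by
  simp_rw [bhattacharyya, Real.sqrt_mul_self_eq_abs]
  calc (1 : ℝ) = |∑ y, W x y| := by rw [hW1, abs_one]
    _ ≤ ∑ y, |W x y| := abs_sum_le_sum_abs _ _

variable {𝕜 E : Type*} [RCLike 𝕜] [SeminormedAddCommGroup E] [InnerProductSpace 𝕜 E]
  {W : X → Y → ℝ} {ρ : ℝ} {ψt : X → E}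

theorem norm_inner_le_bhattacharyya_rpow (hW1 : ∀ x, ∑ y, W x y = 1) (hρ : 0 ≤ ρ)
    (hψt : ∀ x, ‖ψt x‖ = 1)
    (hrep : ∀ x x', x ≠ x' → ‖⟪ψt x, ψt x'⟫_𝕜‖ ≤ bhattacharyya W x x' ^ (1 / ρ)) (x x' : X) :
    ‖⟪ψt x, ψt x'⟫_𝕜‖ ≤ bhattacharyya W x x' ^ (1 / ρ) := by
  rcases eq_or_ne x x' with rfl | hxx'
  · rw [inner_self_eq_norm_sq_to_K, hψt, RCLike.ofReal_one, one_pow, norm_one]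
    exact Real.one_le_rpow (one_le_bhattacharyya_self (hW1 x)) (by positivity)
  · exact hrep x x' hxx'

theorem prod_norm_inner_le_rpow_prod_bhattacharyya {ι : Type*} [Fintype ι]
    (hW1 : ∀ x, ∑ y, W x y = 1) (hρ : 0 ≤ ρ) (hψt : ∀ x, ‖ψt x‖ = 1)
    (hrep : ∀ x x', x ≠ x' → ‖⟪ψt x, ψt x'⟫_𝕜‖ ≤ bhattacharyya W x x' ^ (1 / ρ))
    (w w' : ι → X) :
    ∏ i, ‖⟪ψt (w i), ψt (w' i)⟫_𝕜‖ ≤ (∏ i, bhattacharyya W (w i) (w' i)) ^ (1 / ρ) := by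
  rw [← Real.finsetProd_rpow _ _ fun i _ => bhattacharyya_nonneg W _ _]
  exact prod_le_prod (fun i _ => norm_nonneg _) fun i _ =>
    norm_inner_le_bhattacharyya_rpow hW1 hρ hψt hrep _ _

end Channel

theorem rpow_div_le_of_mul_le_one_add {M ε ρ P : ℝ} (hρ : 0 < ρ) (hM : 1 < M)
    (hMε : 1 ≤ M * ε) (hP : 0 ≤ P) (h : M * ε ≤ 1 + (M - 1) * P ^ (1 / ρ)) :
    ((M * ε - 1) / (M - 1)) ^ ρ ≤ P := calc
  ((M * ε - 1) / (M - 1)) ^ ρ ≤ (P ^ (1 / ρ)) ^ ρ := by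
    refine Real.rpow_le_rpow (div_nonneg (by linarith) (by linarith)) ?_ hρ.le
    rw [div_le_iff₀ (by linarith)]
    linarith
  _ = P := by rw [← Real.rpow_mul hP, one_div_mul_cancel hρ.ne', Real.rpow_one]

theorem prod_comp_eq_prod_pow_of_card_fiber {ι X M : Type*} [Fintype ι] [Fintype X]
    [DecidableEq X] [CommMonoid M] {c : ι → X} {k : X → ℕ}
    (hc : ∀ a, #{i | c i = a} = k a) (g : X → M) : ∏ i, g (c i) = ∏ a, g a ^ k a := by
  rw [← prod_fiberwise' univ c g]
  simp [hc]

theorem stmt3_general {X Y : Type*} [Fintype X] [Fintype Y] [DecidableEq X]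
    {E : Type*} [NormedAddCommGroup E] [InnerProductSpace ℂ E]
    (W : X → Y → ℝ) (hW1 : ∀ x, ∑ y, W x y = 1)
    (ρ : ℝ) (hρ : 1 ≤ ρ)
    (ψt : X → E) (hψt : ∀ x, ‖ψt x‖ = 1)
    (hrep : ∀ x x', x ≠ x' →
      ‖(inner ℂ (ψt x) (ψt x') : ℂ)‖ ≤ (∑ y, Real.sqrt (W x y * W x' y)) ^ (1 / ρ))
    (f : E) (hf : ‖f‖ = 1)
    (n : ℕ) (k : X → ℕ)
    (θ : ℝ) (hθ : Real.exp (-(n * θ)) ≤ ∏ a, ‖(inner ℂ (ψt a) f : ℂ)‖ ^ (2 * k a))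
    (M : ℕ) (hM : 2 ≤ M)
    (c : Fin M → Fin n → X)
    (hc : ∀ m a, (Finset.univ.filter fun i => c m i = a).card = k a)
    (hMe : 1 ≤ (M : ℝ) * Real.exp (-(n * θ))) :
    ∃ m m', m ≠ m' ∧
      (((M : ℝ) * Real.exp (-(n * θ)) - 1) / ((M : ℝ) - 1)) ^ ρ
        ≤ ∏ i, ∑ y, Real.sqrt (W (c m i) y * W (c m' i) y) := by
  have hρ0 : 0 < ρ := by linarith
  obtain ⟨V, G, hV_norm, hG_norm, hVG, hVV⟩ := exists_unit_vectors_inner_eq_prod_inner (𝕜 := ℂ)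
    (u := fun m i => ψt (c m i)) (fun _ _ => hψt _) (fun _ => hf)
  have hVG_lower : ∀ m, Real.exp (-(n * θ)) ≤ ‖⟪V m, G⟫_ℂ‖ ^ 2 := fun m => by
    rw [hVG, norm_prod, ← prod_pow,
      prod_comp_eq_prod_pow_of_card_fiber (hc m) fun a => ‖⟪ψt a, f⟫_ℂ‖ ^ 2]
    simpa [← pow_mul, mul_comm] using hθ
  obtain ⟨⟨m, m'⟩, hmm', hmax⟩ := exists_max_image univ.offDiag
    (fun p => ∏ i, bhattacharyya W (c p.1 i) (c p.2 i))
    ⟨(⟨0, by omega⟩, ⟨1, by omega⟩), by simp [Fin.ext_iff]⟩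
  have hP : 0 ≤ ∏ i, bhattacharyya W (c m i) (c m' i) :=
    prod_nonneg fun i _ => bhattacharyya_nonneg W _ _
  have hVV_upper : ∀ m₁ m₂, m₁ ≠ m₂ →
      ‖⟪V m₁, V m₂⟫_ℂ‖ ≤ (∏ i, bhattacharyya W (c m i) (c m' i)) ^ (1 / ρ) := fun m₁ m₂ h => by
    rw [hVV, norm_prod]
    exact (prod_norm_inner_le_rpow_prod_bhattacharyya hW1 hρ0.le hψt hrep _ _).trans <|
      Real.rpow_le_rpow (prod_nonneg fun i _ => bhattacharyya_nonneg W _ _)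
        (hmax (m₁, m₂) (by simpa using h)) (by positivity)
  have : Nonempty (Fin M) := ⟨⟨0, by omega⟩⟩
  have key := card_mul_le_of_norm_inner_le hV_norm hG_norm hVG_lower hVV_upper
  rw [Fintype.card_fin] at key
  exact ⟨m, m', (mem_offDiag.1 hmm').2.2,
    rpow_div_le_of_mul_le_one_add hρ0 (by exact_mod_cast hM) hMe hP key⟩

/-- Constant-composition umbrella bound: for codewords all of composition `k` and a
handle `f` with `∏_a |⟨ψt a, f⟩|^{2 k(a)} ≥ e^{−nθ}`, some pair `m ≠ m'` of codewords
has Bhattacharyya coefficient at least `((M e^{−nθ} − 1)/(M − 1))^ρ`. -/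
theorem stmt3 {X Y : Type*} [Fintype X] [Fintype Y] [DecidableEq X]
    {E : Type*} [NormedAddCommGroup E] [InnerProductSpace ℂ E] [FiniteDimensional ℂ E]
    (W : X → Y → ℝ) (hW0 : ∀ x y, 0 ≤ W x y) (hW1 : ∀ x, ∑ y, W x y = 1)
    (ρ : ℝ) (hρ : 1 ≤ ρ)
    (ψt : X → E) (hψt : ∀ x, ‖ψt x‖ = 1)
    (hrep : ∀ x x', x ≠ x' →
      ‖(inner ℂ (ψt x) (ψt x') : ℂ)‖ ≤ (∑ y, Real.sqrt (W x y * W x' y)) ^ (1 / ρ))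
    (f : E) (hf : ‖f‖ = 1)
    (n : ℕ) (hn : 1 ≤ n) (k : X → ℕ) (hk : ∑ a, k a = n)
    (θ : ℝ) (hθ : Real.exp (-(n * θ)) ≤ ∏ a, ‖(inner ℂ (ψt a) f : ℂ)‖ ^ (2 * k a))
    (M : ℕ) (hM : 2 ≤ M)
    (c : Fin M → Fin n → X)
    (hc : ∀ m a, (Finset.univ.filter fun i => c m i = a).card = k a)
    (hMe : 1 ≤ (M : ℝ) * Real.exp (-(n * θ))) :
    ∃ m m', m ≠ m' ∧
      (((M : ℝ) * Real.exp (-(n * θ)) - 1) / ((M : ℝ) - 1)) ^ ρ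
        ≤ ∏ i, ∑ y, Real.sqrt (W (c m i) y * W (c m' i) y) :=
  stmt3_general W hW1 ρ hρ ψt hψt hrep f hf n k θ hθ M hM c hc hMe
end

section
/- Let X be a finite set, n ≥ 1, let k : X → ℕ satisfy ∑_a k(a) = n, and let m : X × X → ℕ satisfy ∑_b m(a,b) = k(a) for every a and ∑_a m(a,b) = k(b) for every b. Let c ∈ X^n be a sequence of composition k. Then the number of sequences x̄ ∈ X^n of composition k such that c has conditional composition m from x̄ equals ∏_{b ∈ X} k(b)! divided by ∏_{a,b ∈ X} m(a,b)!. -/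
/-!
The permutations of positions that fix `c` form a group of order `∏ b, k(b)!` acting on
sequences `x̄`. Two sequences with the same joint type with `c` differ by such a permutation, so
the sequences in question form one orbit, nonempty because the column sums of `m` match the
composition of `c`. The stabilizer of one of them fixes the pair sequence `(x̄, c)`, so it has
order `∏ a b, m(a,b)!`, and the count follows from the orbit-stabilizer theorem.
-/

open Finset Equiv MulAction

section

variable {α β γ : Type*}

theorem Finset.card_filter_eq_sum_card_filter_and [Fintype β] [DecidableEq β] (s : Finset α)
    (p : α → Prop) [DecidablePred p] (f : α → β) :
    #{a ∈ s | p a} = ∑ b, #{a ∈ s | p a ∧ f a = b} := by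
  rw [card_eq_sum_card_fiberwise (f := f) (t := univ) fun _ _ => mem_coe.2 (mem_univ _)]
  simp only [filter_filter]

theorem exists_card_fiber_eq [Fintype α] [Fintype β] [DecidableEq β] (k : β → ℕ)
    (hk : ∑ b, k b = Fintype.card α) : ∃ f : α → β, ∀ b, Fintype.card {a // f a = b} = k b := by
  let e : α ≃ Σ b, Fin (k b) := Fintype.equivOfCardEq (by simp [hk])
  refine ⟨fun a => (e a).1, fun b => ?_⟩
  simpa using Fintype.card_congr ((e.subtypeEquiv fun _ => Iff.rfl).trans (sigmaSubtype b))

theorem exists_perm_comp_eq_iff [Fintype α] [DecidableEq β] {f g : α → β} :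
    (∃ σ : Perm α, f ∘ σ = g) ↔
      ∀ b, Fintype.card {a // f a = b} = Fintype.card {a // g a = b} := by
  constructor
  · rintro ⟨σ, rfl⟩ b
    exact (Fintype.card_congr (σ.subtypeEquiv fun _ => Iff.rfl)).symm
  · intro h
    let e b : {a // g a = b} ≃ {a // f a = b} := Fintype.equivOfCardEq (h b).symm
    exact ⟨Equiv.ofFiberEquiv e, funext (Equiv.ofFiberEquiv_map e)⟩

theorem exists_card_fiber_pair_eq [Fintype α] [Fintype β] [DecidableEq β]
    [Fintype γ] [DecidableEq γ] (c : α → β) (m : γ × β → ℕ)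
    (hm : ∀ b, ∑ a, m (a, b) = Fintype.card {i // c i = b}) :
    ∃ y : α → γ, ∀ p, Fintype.card {i // (y i, c i) = p} = m p := by
  obtain ⟨F, hF⟩ := exists_card_fiber_eq (α := α) m (by
    simp only [Fintype.sum_prod_type_right, hm]
    rw [← Fintype.card_sigma, Fintype.card_congr (Equiv.sigmaFiberEquiv c)])
  have hsnd : ∀ b, Fintype.card {i // (F i).2 = b} = Fintype.card {i // c i = b} := by
    intro b
    rw [← hm, Fintype.card_subtype, card_filter_eq_sum_card_filter_and _ _ fun i => (F i).1]
    refine sum_congr rfl fun a _ => ?_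
    rw [← hF, Fintype.card_subtype]
    simp only [Prod.ext_iff, and_comm]
  obtain ⟨σ, hσ⟩ := exists_perm_comp_eq_iff.2 hsnd
  refine ⟨fun i => (F (σ i)).1, fun p => ?_⟩
  rw [← hF, ← exists_perm_comp_eq_iff.1 ⟨σ, funext fun i => ?_⟩ p]
  simp [← hσ]

namespace DomMulAct

theorem natCard_stabilizer [Fintype α] [DecidableEq α] [Fintype β] [DecidableEq β] (f : α → β) :
    Nat.card (stabilizer (Perm α)ᵈᵐᵃ f) = ∏ b, (Fintype.card {a // f a = b}).factorial := by
  rw [← stabilizer_card, ← Nat.card_eq_fintype_card]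
  exact Nat.card_congr (subtypeEquiv mk.symm fun _ => mem_stabilizer_iff)

theorem mem_stabilizer_pair_iff (y : α → γ) (c : α → β) (g : (Perm α)ᵈᵐᵃ) :
    g ∈ stabilizer (Perm α)ᵈᵐᵃ (fun i => (y i, c i)) ↔
      g ∈ stabilizer (Perm α)ᵈᵐᵃ y ∧ g ∈ stabilizer (Perm α)ᵈᵐᵃ c := by
  simp only [mem_stabilizer_iff, funext_iff, Function.comp_apply, Prod.mk.injEq, forall_and]

def stabilizerStabilizerEquiv (y : α → γ) (c : α → β) :
    stabilizer (stabilizer (Perm α)ᵈᵐᵃ c) y ≃ stabilizer (Perm α)ᵈᵐᵃ (fun i => (y i, c i)) where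
  toFun g := ⟨g.1.1, (mem_stabilizer_pair_iff y c _).2 ⟨g.2, g.1.2⟩⟩
  invFun g := ⟨⟨g.1, ((mem_stabilizer_pair_iff y c _).1 g.2).2⟩,
    ((mem_stabilizer_pair_iff y c _).1 g.2).1⟩

theorem mem_orbit_stabilizer_iff (c : α → β) (y₀ y : α → γ) :
    y ∈ orbit (stabilizer (Perm α)ᵈᵐᵃ c) y₀ ↔
      ∃ σ : Perm α, (fun i => (y₀ i, c i)) ∘ σ = fun i => (y i, c i) := by
  constructor
  · rintro ⟨⟨g, hg⟩, rfl⟩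
    exact ⟨mk.symm g, funext fun i => Prod.ext rfl (congrFun (mem_stabilizer_iff.1 hg) i)⟩
  · rintro ⟨σ, h⟩
    have hc : mk σ ∈ stabilizer (Perm α)ᵈᵐᵃ c :=
      mem_stabilizer_iff.2 (funext fun i => congrArg Prod.snd (congrFun h i))
    exact ⟨⟨mk σ, hc⟩, funext fun i => congrArg Prod.fst (congrFun h i)⟩

end DomMulAct

theorem natCard_card_fiber_pair_eq_mul_prod_factorial [Fintype α] [DecidableEq α] [Fintype β]
    [DecidableEq β] [Fintype γ] [DecidableEq γ] (c : α → β) (y₀ : α → γ) :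
    Nat.card {y : α → γ // ∀ p, Fintype.card {i // (y i, c i) = p} =
        Fintype.card {i // (y₀ i, c i) = p}} *
      ∏ p, (Fintype.card {i // (y₀ i, c i) = p}).factorial =
      ∏ b, (Fintype.card {i // c i = b}).factorial := by
  set G := stabilizer (Perm α)ᵈᵐᵃ c
  have horbit : {y : α → γ | ∀ p, Fintype.card {i // (y i, c i) = p} =
      Fintype.card {i // (y₀ i, c i) = p}} = orbit G y₀ :=
    Set.ext fun y => (forall_congr' fun _ => eq_comm).trans
      ((DomMulAct.mem_orbit_stabilizer_iff c y₀ y).trans exists_perm_comp_eq_iff).symm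
  calc _ = Nat.card (orbit G y₀) * Nat.card (stabilizer G y₀) := by
        rw [Nat.card_congr (DomMulAct.stabilizerStabilizerEquiv y₀ c), DomMulAct.natCard_stabilizer]
        exact congrArg (· * _) (Nat.card_congr (Equiv.setCongr horbit))
    _ = Nat.card G := by rw [← Nat.card_prod, Nat.card_congr (orbitProdStabilizerEquivGroup G y₀)]
    _ = _ := DomMulAct.natCard_stabilizer c

end

theorem stmt6_general {X : Type*} [Fintype X] [DecidableEq X]
    (n : ℕ) (k : X → ℕ)
    (mm : X × X → ℕ)
    (hrow : ∀ a, ∑ b, mm (a, b) = k a) (hcol : ∀ b, ∑ a, mm (a, b) = k b)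
    (c : Fin n → X) (hc : ∀ a, (Finset.univ.filter fun i => c i = a).card = k a) :
    Nat.card {xbar : Fin n → X //
        (∀ a, (Finset.univ.filter fun i => xbar i = a).card = k a) ∧
        (∀ a b, (Finset.univ.filter fun i => xbar i = a ∧ c i = b).card = mm (a, b))}
      = (∏ b, (k b).factorial) / (∏ p : X × X, (mm p).factorial) := by
  have hpair (y : Fin n → X) (a b : X) :
      Fintype.card {i // (y i, c i) = (a, b)} = #{i | y i = a ∧ c i = b} := by
    simp only [Fintype.card_subtype, Prod.mk.injEq]
  have hc' (b : X) : Fintype.card {i // c i = b} = k b := by rw [Fintype.card_subtype, hc]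
  obtain ⟨y₀, hy₀⟩ := exists_card_fiber_pair_eq c mm fun b => by rw [hcol, hc']
  have hclass (y : Fin n → X) : ((∀ a, #{i | y i = a} = k a) ∧
      ∀ a b, #{i | y i = a ∧ c i = b} = mm (a, b)) ↔
      ∀ p, Fintype.card {i // (y i, c i) = p} = mm p := by
    simp only [Prod.forall, hpair, and_iff_right_iff_imp]
    intro hm a
    rw [card_filter_eq_sum_card_filter_and univ _ c, ← hrow]
    exact sum_congr rfl fun b _ => hm a b
  have hcount := natCard_card_fiber_pair_eq_mul_prod_factorial c y₀
  simp only [hy₀, hc'] at hcount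
  rw [Nat.card_congr (Equiv.subtypeEquivRight hclass)]
  exact (Nat.div_eq_of_eq_mul_left (prod_pos fun p _ => Nat.factorial_pos _) hcount.symm).symm

/-- Counting sequences `x̄` of composition `k` from which a fixed sequence `c` of
composition `k` has conditional composition `mm`: there are exactly
`(∏_b k(b)!) / (∏_{a,b} m(a,b)!)` of them. -/
theorem stmt6 {X : Type*} [Fintype X] [DecidableEq X]
    (n : ℕ) (hn : 1 ≤ n) (k : X → ℕ) (hk : ∑ a, k a = n)
    (mm : X × X → ℕ)
    (hrow : ∀ a, ∑ b, mm (a, b) = k a) (hcol : ∀ b, ∑ a, mm (a, b) = k b)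
    (c : Fin n → X) (hc : ∀ a, (Finset.univ.filter fun i => c i = a).card = k a) :
    Nat.card {xbar : Fin n → X //
        (∀ a, (Finset.univ.filter fun i => xbar i = a).card = k a) ∧
        (∀ a b, (Finset.univ.filter fun i => xbar i = a ∧ c i = b).card = mm (a, b))}
      = (∏ b, (k b).factorial) / (∏ p : X × X, (mm p).factorial) :=
  stmt6_general n k mm hrow hcol c hc
end

section
/- Let X be a finite set, n ≥ 1, let k : X → ℕ satisfy ∑_a k(a) = n, and let m : X × X → ℕ satisfy ∑_b m(a,b) = k(a) for every a and ∑_a m(a,b) = k(b) for every b. Let c_1, …, c_M ∈ X^n (M ≥ 1) be codewords each of composition k. Then there exists a sequence x̄ ∈ X^n of composition k such that the number of indices j ∈ {1, …, M} for which c_j has conditional composition m from x̄ is at least M · N / S, where N = (∏_{b ∈ X} k(b)!) / (∏_{a,b ∈ X} m(a,b)!) and S = n! / ∏_{a ∈ X} k(a)!. -/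
/-!
The permutations of the index set act by precomposition on sequences, and two sequences lie in
the same orbit exactly when they have the same composition. The stabilizer of a sequence of
composition `k` is `∏ₐ Perm {i | x i = a}`, so by orbit–stabilizer there are `n! / ∏ₐ k(a)!`
sequences of composition `k`.

Splitting the index set along the fibres of a codeword `y` of composition `k`, the sequences `x̄`
from which `y` has conditional composition `m` are exactly the families of sequences of
composition `m(·, b)` on the fibres `{y = b}`; there are `∏_b k(b)! / ∏_{a,b} m(a,b)!` of them,
and the row sums make all of them of composition `k`. Double counting the pairs (`x̄`, codeword),
some `x̄` of composition `k` is paired with at least the average number `M · N / S` of codewords.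
-/

open Finset

section Composition

variable {ι X Y : Type*} [Fintype ι] [DecidableEq X] [DecidableEq Y]

theorem exists_perm_comp_eq_iff_s7 {x y : ι → X} :
    (∃ σ : Equiv.Perm ι, x ∘ σ = y) ↔ ∀ a, #{i | x i = a} = #{i | y i = a} := by
  constructor
  · rintro ⟨σ, rfl⟩ a
    exact card_equiv σ.symm (by simp)
  · intro h
    refine ⟨Equiv.ofFiberEquiv fun a =>
      (Fintype.equivOfCardEq ?_ : {i // y i = a} ≃ {i // x i = a}),
      funext (Equiv.ofFiberEquiv_map _)⟩
    simp only [Fintype.card_subtype, h]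

theorem card_filter_and_eq_card_filter_subtype (x : ι → X) (y : ι → Y) (a : X) (b : Y) :
    #{i | x i = a ∧ y i = b} = #{i : {i // y i = b} | x i = a} := by
  rw [← Fintype.card_subtype, ← Fintype.card_subtype]
  exact Fintype.card_congr ((Equiv.subtypeSubtypeEquivSubtypeInter _ _).trans
    (Equiv.subtypeEquivRight fun _ => and_comm)).symm

variable (ι) [DecidableEq ι] [Fintype X]

def compositionClass (k : X → ℕ) : Finset (ι → X) :=
  {x | ∀ a, #{i | x i = a} = k a}

theorem compositionClass_nonempty {k : X → ℕ} (hk : ∑ a, k a = Fintype.card ι) :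
    (compositionClass ι k).Nonempty := by
  obtain ⟨e⟩ : Nonempty (ι ≃ Σ a, Fin (k a)) := Fintype.card_eq.1 (by simp [hk])
  refine ⟨fun i => (e i).1, mem_filter.2 ⟨mem_univ _, fun a => ?_⟩⟩
  rw [← Fintype.card_subtype, ← Fintype.card_fin (k a)]
  exact Fintype.card_congr ((e.subtypeEquiv fun _ => Iff.rfl).trans (Equiv.sigmaSubtype a))

open MulAction DomMulAct in
theorem card_compositionClass_mul_prod_factorial {k : X → ℕ}
    (hk : ∑ a, k a = Fintype.card ι) :
    #(compositionClass ι k) * ∏ a, (k a).factorial = (Fintype.card ι).factorial := by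
  obtain ⟨x, hx⟩ := compositionClass_nonempty ι hk
  simp only [compositionClass, mem_filter, mem_univ, true_and] at hx
  have horbit : orbit (Equiv.Perm ι)ᵈᵐᵃ x = compositionClass ι k := by
    ext y
    refine (⟨fun ⟨g, hg⟩ => ⟨mk.symm g, hg⟩, fun ⟨σ, hσ⟩ => ⟨mk σ, hσ⟩⟩ :
      _ ↔ ∃ σ : Equiv.Perm ι, x ∘ σ = y).trans (exists_perm_comp_eq_iff_s7.trans ?_)
    simp only [hx, compositionClass, coe_filter, mem_univ, true_and, Set.mem_ofPred_eq]
    exact forall_congr' fun _ => eq_comm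
  have hstab : Nat.card (stabilizer (Equiv.Perm ι)ᵈᵐᵃ x) = ∏ a, (k a).factorial := by
    rw [Nat.card_congr (Equiv.subtypeEquiv (q := fun σ : Equiv.Perm ι => x ∘ σ = x) mk.symm
      fun _ => DomMulAct.mem_stabilizer_iff), Nat.card_eq_fintype_card, stabilizer_card]
    simp only [Fintype.card_subtype, hx]
  have horbit_stab := (stabilizer (Equiv.Perm ι)ᵈᵐᵃ x).card_mul_index
  rw [index_stabilizer, horbit, Set.ncard_coe_finset, hstab, Nat.card_congr mk.symm,
    Nat.card_perm, Nat.card_eq_fintype_card] at horbit_stab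
  rw [← horbit_stab, mul_comm]

variable {ι} [Fintype Y]

def jointCompositionClass (y : ι → Y) (m : X × Y → ℕ) : Finset (ι → X) :=
  {x | ∀ a b, #{i | x i = a ∧ y i = b} = m (a, b)}

theorem card_jointCompositionClass (y : ι → Y) (m : X × Y → ℕ) :
    #(jointCompositionClass y m) =
      ∏ b, #(compositionClass {i // y i = b} fun a => m (a, b)) := by
  let e : (ι → X) ≃ ∀ b, {i // y i = b} → X :=
    ((Equiv.sigmaFiberEquiv y).symm.arrowCongr (Equiv.refl X)).trans
      (Equiv.piCurry fun _ _ => X)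
  have he (x : ι → X) (b : Y) (i : {i // y i = b}) : e x b i = x i := rfl
  rw [← Fintype.card_piFinset]
  refine card_equiv e fun x => ?_
  simp only [jointCompositionClass, compositionClass, Fintype.mem_piFinset, mem_filter, mem_univ,
    true_and, he, card_filter_and_eq_card_filter_subtype]
  exact forall_comm

theorem card_jointCompositionClass_mul_prod_factorial (y : ι → Y) {m : X × Y → ℕ}
    (hm : ∀ b, ∑ a, m (a, b) = #{i | y i = b}) :
    #(jointCompositionClass y m) * ∏ p, (m p).factorial = ∏ b, (#{i | y i = b}).factorial := by
  rw [card_jointCompositionClass, Fintype.prod_prod_type_right, ← prod_mul_distrib]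
  refine prod_congr rfl fun b _ => ?_
  rw [← Fintype.card_subtype]
  exact card_compositionClass_mul_prod_factorial _ (by rw [hm, Fintype.card_subtype])

theorem jointCompositionClass_subset_compositionClass (y : ι → Y) {m : X × Y → ℕ}
    {k : X → ℕ} (hm : ∀ a, ∑ b, m (a, b) = k a) :
    jointCompositionClass y m ⊆ compositionClass ι k := by
  intro x hx
  simp only [jointCompositionClass, compositionClass, mem_filter, mem_univ, true_and] at hx ⊢
  intro a
  rw [card_eq_sum_card_fiberwise (f := y) (t := univ) fun _ _ => mem_univ _, ← hm]
  simp only [filter_filter, hx]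

end Composition

theorem Finset.exists_sum_card_div_card_le_card_filter_mem {α J 𝕜 : Type*} [DecidableEq α]
    [Fintype J] [Semifield 𝕜] [LinearOrder 𝕜] [IsStrictOrderedRing 𝕜] {T : Finset α}
    (hT : T.Nonempty) (G : J → Finset α) (hGT : ∀ j, G j ⊆ T) :
    ∃ x ∈ T, (∑ j, (#(G j) : 𝕜)) / #T ≤ #{j | x ∈ G j} := by
  refine exists_le_of_sum_le hT ?_
  have hdouble : ∑ x ∈ T, #{j | x ∈ G j} = ∑ j, #(G j) := by
    have := sum_card_bipartiteAbove_eq_sum_card_bipartiteBelow (s := T) (t := univ)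
      (r := fun x j => x ∈ G j)
    simpa [bipartiteAbove, bipartiteBelow, filter_mem_eq_inter, inter_eq_right.2 (hGT _)]
      using this
  rw [sum_const, nsmul_eq_mul, mul_div_cancel₀ _ (by positivity)]
  exact_mod_cast hdouble.ge

theorem stmt7_general {X : Type*} [Fintype X] [DecidableEq X]
    (n : ℕ) (k : X → ℕ) (hk : ∑ a, k a = n)
    (mm : X × X → ℕ)
    (hrow : ∀ a, ∑ b, mm (a, b) = k a) (hcol : ∀ b, ∑ a, mm (a, b) = k b)
    (M : ℕ) (c : Fin M → Fin n → X)
    (hc : ∀ j a, (Finset.univ.filter fun i => c j i = a).card = k a) :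
    ∃ xbar : Fin n → X,
      (∀ a, (Finset.univ.filter fun i => xbar i = a).card = k a) ∧
      (M : ℝ) * (((∏ b, (k b).factorial : ℕ) : ℝ) / ((∏ p : X × X, (mm p).factorial : ℕ) : ℝ))
          / (((n.factorial : ℕ) : ℝ) / ((∏ a, (k a).factorial : ℕ) : ℝ))
        ≤ Nat.card {j : Fin M //
            ∀ a b, (Finset.univ.filter fun i => xbar i = a ∧ c j i = b).card = mm (a, b)} := by
  have hkn : ∑ a, k a = Fintype.card (Fin n) := by rw [hk, Fintype.card_fin]
  have hT : (#(compositionClass (Fin n) k) : ℝ) =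
      ((n.factorial : ℕ) : ℝ) / ((∏ a, (k a).factorial : ℕ) : ℝ) := by
    rw [eq_div_iff (by positivity), ← Nat.cast_mul,
      card_compositionClass_mul_prod_factorial _ hkn, Fintype.card_fin]
  have hG (j : Fin M) : (#(jointCompositionClass (c j) mm) : ℝ) =
      ((∏ b, (k b).factorial : ℕ) : ℝ) / ((∏ p : X × X, (mm p).factorial : ℕ) : ℝ) := by
    rw [eq_div_iff (by positivity), ← Nat.cast_mul,
      card_jointCompositionClass_mul_prod_factorial _ fun b => by rw [hcol, hc]]
    simp only [hc]
  obtain ⟨x, hxT, hx⟩ := exists_sum_card_div_card_le_card_filter_mem (𝕜 := ℝ)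
    (compositionClass_nonempty _ hkn) (fun j => jointCompositionClass (c j) mm)
    fun _ => jointCompositionClass_subset_compositionClass _ hrow
  refine ⟨x, (mem_filter.1 hxT).2, ?_⟩
  calc _ = (∑ j, (#(jointCompositionClass (c j) mm) : ℝ)) / #(compositionClass (Fin n) k) := by
        simp only [hG, hT, sum_const, card_univ, Fintype.card_fin, nsmul_eq_mul]
    _ ≤ _ := hx
    _ = _ := by
        rw [Nat.card_eq_fintype_card, Fintype.card_subtype]
        simp only [jointCompositionClass, mem_filter, mem_univ, true_and]

/-- Pigeonhole step of the Elias/Blahut scheme: among `M` codewords of composition `k`,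
there is a sequence `x̄` of composition `k` such that at least `M · N / S` codewords
have conditional composition `mm` from `x̄`, where `N = (∏_b k(b)!)/(∏_{a,b} m(a,b)!)`
and `S = n! / ∏_a k(a)!`. -/
theorem stmt7 {X : Type*} [Fintype X] [DecidableEq X]
    (n : ℕ) (hn : 1 ≤ n) (k : X → ℕ) (hk : ∑ a, k a = n)
    (mm : X × X → ℕ)
    (hrow : ∀ a, ∑ b, mm (a, b) = k a) (hcol : ∀ b, ∑ a, mm (a, b) = k b)
    (M : ℕ) (hM : 1 ≤ M) (c : Fin M → Fin n → X)
    (hc : ∀ j a, (Finset.univ.filter fun i => c j i = a).card = k a) :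
    ∃ xbar : Fin n → X,
      (∀ a, (Finset.univ.filter fun i => xbar i = a).card = k a) ∧
      (M : ℝ) * (((∏ b, (k b).factorial : ℕ) : ℝ) / ((∏ p : X × X, (mm p).factorial : ℕ) : ℝ))
          / (((n.factorial : ℕ) : ℝ) / ((∏ a, (k a).factorial : ℕ) : ℝ))
        ≤ Nat.card {j : Fin M //
            ∀ a b, (Finset.univ.filter fun i => xbar i = a ∧ c j i = b).card = mm (a, b)} :=
  stmt7_general n k hk mm hrow hcol M c hc
end

section
/- Let X be a finite set with |X| elements, n ≥ 1, let k : X → ℕ satisfy ∑_a k(a) = n, and let m : X × X → ℕ satisfy ∑_b m(a,b) = k(a) for every a and ∑_a m(a,b) = k(b) for every b. Define N = (∏_{b ∈ X} k(b)!) / (∏_{a,b ∈ X} m(a,b)!) and S = n! / ∏_{a ∈ X} k(a)!. Then N / S ≥ (n+1)^{−|X|²} · exp(−n·I), where I = ∑_{(a,b) : m(a,b) > 0} (m(a,b)/n) · log( n·m(a,b) / (k(a)·k(b)) ). -/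
namespace Stmt8Aux
open Finset

private lemma aux1 (l : ℕ) : ∀ d : ℕ, (l + d).factorial ≤ l.factorial * (l + d) ^ d := by
  intro d; induction d with
  | zero => simp
  | succ d ih =>
      have : (l + (d+1)).factorial = (l + d + 1) * (l + d).factorial := by
        rw [← Nat.add_assoc]; rfl
      rw [this]
      calc (l + d + 1) * (l + d).factorial ≤ (l + d + 1) * (l.factorial * (l + d) ^ d) :=
            Nat.mul_le_mul_left _ ih
        _ ≤ (l + d + 1) * (l.factorial * (l + d + 1) ^ d) := by
            exact Nat.mul_le_mul_left _ (Nat.mul_le_mul_left _ (Nat.pow_le_pow_left (by omega) d))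
        _ = l.factorial * (l + (d+1)) ^ (d+1) := by ring_nf
  
private lemma aux2 (m : ℕ) : ∀ d : ℕ, m.factorial * m ^ d ≤ (m + d).factorial := by
  intro d; induction d with
  | zero => simp
  | succ d ih =>
      have : (m + (d+1)).factorial = (m + d + 1) * (m + d).factorial := by
        rw [← Nat.add_assoc]; rfl
      rw [this]
      calc m.factorial * m ^ (d+1) = (m.factorial * m ^ d) * m := by ring
        _ ≤ (m + d).factorial * (m + d + 1) := Nat.mul_le_mul ih (by omega)
        _ = (m + d + 1) * (m + d).factorial := Nat.mul_comm _ _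

private lemma key_fact (m l : ℕ) : m.factorial * m ^ l ≤ l.factorial * m ^ m := by
  rcases Nat.le_total l m with h | h
  · obtain ⟨d, rfl⟩ := Nat.exists_eq_add_of_le h
    calc (l+d).factorial * (l+d) ^ l ≤ (l.factorial * (l + d) ^ d) * (l+d) ^ l :=
          Nat.mul_le_mul_right _ (aux1 l d)
      _ = l.factorial * (l + d) ^ (l + d) := by rw [Nat.mul_assoc, ← pow_add, Nat.add_comm d l]
  · obtain ⟨d, rfl⟩ := Nat.exists_eq_add_of_le h
    calc m.factorial * m ^ (m + d) = (m.factorial * m ^ d) * m ^ m := by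
          rw [Nat.mul_assoc, ← pow_add, Nat.add_comm d m]
      _ ≤ (m + d).factorial * m ^ m := Nat.mul_le_mul_right _ (aux2 m d)

private lemma mult_eq_div {α : Type*} [Fintype α] (f : α → ℕ) :
    (Nat.multinomial univ f : ℝ) =
      ((∑ i, f i).factorial : ℝ) / ∏ i, ((f i).factorial : ℝ) := by
  have h := Nat.multinomial_spec univ f
  have hpos : (0:ℝ) < ∏ i, ((f i).factorial : ℝ) :=
    Finset.prod_pos fun i _ => by exact_mod_cast (f i).factorial_pos
  rw [eq_div_iff hpos.ne', mul_comm]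
  exact_mod_cast congrArg (Nat.cast : ℕ → ℝ) h

private lemma term_le {α : Type*} [Fintype α] (f g : α → ℕ) (hg : ∑ i, g i = ∑ i, f i) :
    (Nat.multinomial univ g : ℝ) * ∏ i, (f i : ℝ) ^ (g i)
      ≤ (Nat.multinomial univ f : ℝ) * ∏ i, (f i : ℝ) ^ (f i) := by
  have hPg : (0:ℝ) < ∏ i, ((g i).factorial : ℝ) :=
    Finset.prod_pos fun i _ => by exact_mod_cast (g i).factorial_pos
  have hPf : (0:ℝ) < ∏ i, ((f i).factorial : ℝ) :=
    Finset.prod_pos fun i _ => by exact_mod_cast (f i).factorial_pos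
  have key : (∏ i, ((f i).factorial : ℝ)) * ∏ i, (f i : ℝ) ^ (g i)
      ≤ (∏ i, ((g i).factorial : ℝ)) * ∏ i, (f i : ℝ) ^ (f i) := by
    rw [← Finset.prod_mul_distrib, ← Finset.prod_mul_distrib]
    refine Finset.prod_le_prod (fun i _ => by positivity) fun i _ => ?_
    exact_mod_cast key_fact (f i) (g i)
  rw [mult_eq_div, mult_eq_div, hg, div_mul_eq_mul_div, div_mul_eq_mul_div,
    div_le_div_iff₀ hPg hPf]
  calc (((∑ i, f i).factorial : ℝ) * ∏ i, (f i : ℝ) ^ (g i)) * ∏ i, ((f i).factorial : ℝ)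
      = ((∑ i, f i).factorial : ℝ) * ((∏ i, ((f i).factorial : ℝ)) * ∏ i, (f i : ℝ) ^ (g i)) := by
        ring
    _ ≤ ((∑ i, f i).factorial : ℝ) * ((∏ i, ((g i).factorial : ℝ)) * ∏ i, (f i : ℝ) ^ (f i)) := by
        have : (0:ℝ) ≤ ((∑ i, f i).factorial : ℝ) := by positivity
        exact mul_le_mul_of_nonneg_left key this
    _ = (((∑ i, f i).factorial : ℝ) * ∏ i, (f i : ℝ) ^ (f i)) * ∏ i, ((g i).factorial : ℝ) := by
        ring

private lemma card_piAntidiag_le {α : Type*} [Fintype α] [DecidableEq α] (n : ℕ) :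
    (piAntidiag (univ : Finset α) n).card ≤ (n + 1) ^ (Fintype.card α) := by
  classical
  calc (piAntidiag (univ : Finset α) n).card
      ≤ (Fintype.piFinset fun _ : α => Finset.range (n+1)).card := by
        refine Finset.card_le_card fun g hg => ?_
        rw [mem_piAntidiag] at hg
        rw [Fintype.mem_piFinset]
        intro i
        rw [Finset.mem_range, Nat.lt_succ_iff, ← hg.1]
        exact Finset.single_le_sum (f := g) (fun _ _ => Nat.zero_le _) (mem_univ i)
    _ ≤ (n + 1) ^ (Fintype.card α) := by
        rw [Fintype.card_piFinset]
        simp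

private lemma expand_one {α : Type*} [Fintype α] [DecidableEq α] (f : α → ℕ) :
    (1 : ℝ) = ∑ g ∈ piAntidiag (univ : Finset α) (∑ i, f i),
      (Nat.multinomial univ g : ℝ) * (∏ i, (f i : ℝ) ^ (g i)) / ((∑ i, f i : ℕ) : ℝ) ^ (∑ i, f i) := by
  set n := ∑ i, f i with hn
  have h := Finset.sum_pow_eq_sum_piAntidiag (univ : Finset α) (fun i => (f i : ℝ) / n) n
  have h1 : ((∑ i, (f i : ℝ) / (n:ℝ)) : ℝ) ^ n = 1 := by
    rcases Nat.eq_zero_or_pos n with h0 | hpos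
    · rw [h0, pow_zero]
    · rw [← Finset.sum_div]
      have : (∑ i, (f i : ℝ)) = (n : ℝ) := by exact_mod_cast congrArg (Nat.cast : ℕ → ℝ) hn.symm
      rw [this, div_self (by positivity), one_pow]
  rw [← h1, h]
  refine Finset.sum_congr rfl fun g hg => ?_
  rw [mem_piAntidiag] at hg
  rw [mul_div_assoc]
  congr 1
  simp_rw [div_pow]
  rw [Finset.prod_div_distrib, Finset.prod_pow_eq_pow_sum, hg.1]

private lemma multA {α : Type*} [Fintype α] (f : α → ℕ) :
    (Nat.multinomial univ f : ℝ) * ∏ i, (f i : ℝ) ^ (f i)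
      ≤ ((∑ i, f i : ℕ) : ℝ) ^ (∑ i, f i) := by
  classical
  set n := ∑ i, f i with hn
  have hmem : f ∈ piAntidiag (univ : Finset α) n := by
    rw [mem_piAntidiag]; exact ⟨rfl, fun i _ => mem_univ i⟩
  have h := expand_one f
  have hle : (Nat.multinomial univ f : ℝ) * (∏ i, (f i : ℝ) ^ (f i)) / ((n : ℕ) : ℝ) ^ n ≤ 1 := by
    rw [h]
    exact Finset.single_le_sum (f := fun g =>
      (Nat.multinomial univ g : ℝ) * (∏ i, (f i : ℝ) ^ (g i)) / ((n:ℕ) : ℝ) ^ n)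
      (fun g _ => by positivity) hmem
  rcases Nat.eq_zero_or_pos n with h0 | hpos
  · have : ((n:ℕ):ℝ) ^ n = 1 := by rw [h0]; norm_num
    rw [this] at hle ⊢
    simpa using hle
  · have hpow : (0:ℝ) < ((n:ℕ):ℝ) ^ n := by positivity
    calc (Nat.multinomial univ f : ℝ) * ∏ i, (f i : ℝ) ^ (f i)
        = ((Nat.multinomial univ f : ℝ) * (∏ i, (f i : ℝ) ^ (f i)) / ((n:ℕ):ℝ)^n) * ((n:ℕ):ℝ)^n := by
          field_simp
      _ ≤ 1 * ((n:ℕ):ℝ)^n := by exact mul_le_mul_of_nonneg_right hle hpow.le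
      _ = ((n:ℕ):ℝ)^n := one_mul _

private lemma multB {α : Type*} [Fintype α] (f : α → ℕ) :
    ((∑ i, f i : ℕ) : ℝ) ^ (∑ i, f i)
      ≤ (((∑ i, f i : ℕ) : ℝ) + 1) ^ (Fintype.card α) *
        ((Nat.multinomial univ f : ℝ) * ∏ i, (f i : ℝ) ^ (f i)) := by
  classical
  set n := ∑ i, f i with hn
  set M : ℝ := (Nat.multinomial univ f : ℝ) * ∏ i, (f i : ℝ) ^ (f i) with hM
  have hMnonneg : 0 ≤ M := by positivity
  have hpow : (0:ℝ) < ((n:ℕ):ℝ) ^ n := by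
    rcases Nat.eq_zero_or_pos n with h0 | hpos
    · rw [h0]; norm_num
    · positivity
  have h1 : (1:ℝ) ≤ ((piAntidiag (univ : Finset α) n).card : ℝ) * (M / ((n:ℕ):ℝ)^n) := by
    rw [expand_one f]
    calc ∑ g ∈ piAntidiag (univ : Finset α) n,
          (Nat.multinomial univ g : ℝ) * (∏ i, (f i : ℝ) ^ (g i)) / ((n:ℕ):ℝ)^n
        ≤ ∑ _g ∈ piAntidiag (univ : Finset α) n, M / ((n:ℕ):ℝ)^n := by
          refine Finset.sum_le_sum fun g hg => ?_
          rw [mem_piAntidiag] at hg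
          exact div_le_div_of_nonneg_right (term_le f g hg.1) hpow.le
      _ = ((piAntidiag (univ : Finset α) n).card : ℝ) * (M / ((n:ℕ):ℝ)^n) := by
          rw [Finset.sum_const, nsmul_eq_mul]
  have hcard : ((piAntidiag (univ : Finset α) n).card : ℝ) ≤ (((n:ℕ):ℝ) + 1) ^ (Fintype.card α) := by
    have h := card_piAntidiag_le (α := α) n
    have : ((piAntidiag (univ : Finset α) n).card : ℝ) ≤ (((n+1) ^ (Fintype.card α) : ℕ) : ℝ) :=
      Nat.cast_le.mpr h
    calc ((piAntidiag (univ : Finset α) n).card : ℝ)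
        ≤ (((n+1) ^ (Fintype.card α) : ℕ) : ℝ) := this
      _ = (((n:ℕ):ℝ) + 1) ^ (Fintype.card α) := by push_cast; ring
  have h2 : (1:ℝ) ≤ (((n:ℕ):ℝ) + 1) ^ (Fintype.card α) * (M / ((n:ℕ):ℝ)^n) := by
    refine h1.trans (mul_le_mul_of_nonneg_right hcard (by positivity))
  calc ((n:ℕ):ℝ) ^ n = 1 * ((n:ℕ):ℝ)^n := (one_mul _).symm
    _ ≤ ((((n:ℕ):ℝ) + 1) ^ (Fintype.card α) * (M / ((n:ℕ):ℝ)^n)) * ((n:ℕ):ℝ)^n :=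
        mul_le_mul_of_nonneg_right h2 hpow.le
    _ = (((n:ℕ):ℝ) + 1) ^ (Fintype.card α) * M := by field_simp

private lemma pow_self_eq_exp (m : ℕ) :
    ((m : ℝ)) ^ m = Real.exp ((m : ℝ) * Real.log m) := by
  rcases Nat.eq_zero_or_pos m with h0 | hpos
  · simp [h0]
  · conv_lhs => rw [← Real.exp_log (x := (m:ℝ)) (by exact_mod_cast hpos)]
    rw [← Real.exp_nat_mul]

private lemma prod_pow_self_eq_exp {α : Type*} [Fintype α] (f : α → ℕ) :
    ∏ i, (f i : ℝ) ^ (f i) = Real.exp (∑ i, (f i : ℝ) * Real.log (f i)) := by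
  rw [Real.exp_sum]
  exact Finset.prod_congr rfl fun i _ => pow_self_eq_exp (f i)

private lemma multA' {α : Type*} [Fintype α] (f : α → ℕ) :
    (Nat.multinomial univ f : ℝ) ≤
      Real.exp (((∑ i, f i : ℕ) : ℝ) * Real.log ((∑ i, f i : ℕ) : ℝ)
        - ∑ i, (f i : ℝ) * Real.log (f i)) := by
  have h := multA f
  rw [prod_pow_self_eq_exp, pow_self_eq_exp] at h
  rw [Real.exp_sub, le_div_iff₀ (Real.exp_pos _)]
  exact h

private lemma multB' {α : Type*} [Fintype α] (f : α → ℕ) :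
    Real.exp (((∑ i, f i : ℕ) : ℝ) * Real.log ((∑ i, f i : ℕ) : ℝ)
        - ∑ i, (f i : ℝ) * Real.log (f i))
      ≤ (((∑ i, f i : ℕ) : ℝ) + 1) ^ (Fintype.card α) * (Nat.multinomial univ f : ℝ) := by
  have h := multB f
  rw [prod_pow_self_eq_exp, pow_self_eq_exp] at h
  rw [Real.exp_sub, div_le_iff₀ (Real.exp_pos _)]
  calc Real.exp (((∑ i, f i : ℕ) : ℝ) * Real.log ((∑ i, f i : ℕ) : ℝ))
      ≤ (((∑ i, f i : ℕ) : ℝ) + 1) ^ (Fintype.card α) *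
        ((Nat.multinomial univ f : ℝ) * Real.exp (∑ i, (f i : ℝ) * Real.log (f i))) := h
    _ = (((∑ i, f i : ℕ) : ℝ) + 1) ^ (Fintype.card α) * (Nat.multinomial univ f : ℝ) *
        Real.exp (∑ i, (f i : ℝ) * Real.log (f i)) := by ring

end Stmt8Aux
open Stmt8Aux Finset in

/-- Type-counting estimate: with `N = (∏_b k(b)!)/(∏_{a,b} m(a,b)!)` and
`S = n!/∏_a k(a)!`, one has `N/S ≥ (n+1)^{−|X|²} e^{−n I}` where
`I = ∑_{(a,b) : m(a,b)>0} (m(a,b)/n) log(n·m(a,b)/(k(a)k(b)))` is the mutual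
information of the joint type. -/
theorem stmt8 {X : Type*} [Fintype X]
    (n : ℕ) (hn : 1 ≤ n) (k : X → ℕ) (hk : ∑ a, k a = n)
    (mm : X × X → ℕ)
    (hrow : ∀ a, ∑ b, mm (a, b) = k a) (hcol : ∀ b, ∑ a, mm (a, b) = k b) :
    ((n : ℝ) + 1) ^ (-(Fintype.card X ^ 2 : ℤ)) *
      Real.exp (-(n * ∑ p ∈ Finset.univ.filter (fun p : X × X => 0 < mm p),
        ((mm p : ℝ) / n) * Real.log ((n : ℝ) * (mm p : ℝ) / ((k p.1 : ℝ) * (k p.2 : ℝ)))))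
      ≤ (((∏ b, (k b).factorial : ℕ) : ℝ) / ((∏ p : X × X, (mm p).factorial : ℕ) : ℝ))
        / (((n.factorial : ℕ) : ℝ) / ((∏ a, (k a).factorial : ℕ) : ℝ)) := by
  classical
  have hn0 : (0:ℝ) < n := by exact_mod_cast hn
  set c := Fintype.card X with hc
  set M : ℕ := Nat.multinomial univ k with hM
  set Ma : X → ℕ := fun a => Nat.multinomial univ (fun b => mm (a, b)) with hMa
  set La : ℝ := ∑ a, (k a : ℝ) * Real.log (k a) with hLa
  set Lm : ℝ := ∑ p : X × X, (mm p : ℝ) * Real.log (mm p) with hLm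
  -- positivity of mm bounded by k
  have hmk1 : ∀ p : X × X, mm p ≤ k p.1 := by
    intro p
    rw [← hrow p.1]
    exact Finset.single_le_sum (f := fun b => mm (p.1, b)) (fun _ _ => Nat.zero_le _)
      (mem_univ p.2)
  have hmk2 : ∀ p : X × X, mm p ≤ k p.2 := by
    intro p
    rw [← hcol p.2]
    exact Finset.single_le_sum (f := fun a => mm (a, p.2)) (fun _ _ => Nat.zero_le _)
      (mem_univ p.1)
  -- rewrite RHS as (∏ Ma) / M
  have hMspec : ((n.factorial : ℕ) : ℝ) / ((∏ a, (k a).factorial : ℕ) : ℝ) = (M : ℝ) := by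
    have h := Nat.multinomial_spec univ k
    rw [hk] at h
    rw [eq_comm, eq_div_iff (by positivity : ((∏ a, (k a).factorial : ℕ) : ℝ) ≠ 0)]
    exact_mod_cast congrArg (Nat.cast : ℕ → ℝ) ((mul_comm M _).trans h)
  have hNspec : ((∏ b, (k b).factorial : ℕ) : ℝ) / ((∏ p : X × X, (mm p).factorial : ℕ) : ℝ)
      = ∏ a, (Ma a : ℝ) := by
    have hsplit : (∏ p : X × X, (mm p).factorial) = ∏ a, ∏ b, (mm (a, b)).factorial :=
      Fintype.prod_prod_type _
    have hprod : (∏ b, (k b).factorial) = (∏ p : X × X, (mm p).factorial) * ∏ a, Ma a := by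
      rw [hsplit, ← Finset.prod_mul_distrib]
      refine Finset.prod_congr rfl fun a _ => ?_
      have h := Nat.multinomial_spec univ (fun b => mm (a, b))
      rw [hrow a] at h
      exact h.symm
    rw [hprod, eq_comm, eq_div_iff (by positivity : ((∏ p : X × X, (mm p).factorial : ℕ) : ℝ) ≠ 0)]
    push_cast
    ring
  rw [hMspec, hNspec]
  -- information identity
  have hsumall : ∑ p : X × X, (mm p : ℝ) = (n : ℝ) := by
    rw [Fintype.sum_prod_type]
    norm_cast
    simp [hrow, hk]
  have hI : (n:ℝ) * ∑ p ∈ Finset.univ.filter (fun p : X × X => 0 < mm p),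
        ((mm p : ℝ) / n) * Real.log ((n : ℝ) * (mm p : ℝ) / ((k p.1 : ℝ) * (k p.2 : ℝ)))
      = (n:ℝ) * Real.log n + Lm - La - La := by
    have hfull : ∑ p ∈ Finset.univ.filter (fun p : X × X => 0 < mm p),
          ((mm p : ℝ) / n) * Real.log ((n : ℝ) * (mm p : ℝ) / ((k p.1 : ℝ) * (k p.2 : ℝ)))
        = ∑ p : X × X, ((mm p : ℝ) / n) *
            Real.log ((n : ℝ) * (mm p : ℝ) / ((k p.1 : ℝ) * (k p.2 : ℝ))) := by
      refine Finset.sum_filter_of_ne fun p _ hne => ?_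
      by_contra hlt
      have h0 : mm p = 0 := by omega
      simp [h0] at hne
    have hterm : ∀ p : X × X, (n:ℝ) * (((mm p : ℝ) / n) *
          Real.log ((n : ℝ) * (mm p : ℝ) / ((k p.1 : ℝ) * (k p.2 : ℝ))))
        = (mm p:ℝ) * Real.log n + (mm p:ℝ) * Real.log (mm p)
          - (mm p:ℝ) * Real.log (k p.1) - (mm p:ℝ) * Real.log (k p.2) := by
      intro p
      rcases Nat.eq_zero_or_pos (mm p) with h0 | hpos
      · simp [h0]
      · have hk1 : (0:ℝ) < k p.1 := by exact_mod_cast lt_of_lt_of_le hpos (hmk1 p)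
        have hk2 : (0:ℝ) < k p.2 := by exact_mod_cast lt_of_lt_of_le hpos (hmk2 p)
        have hm : (0:ℝ) < mm p := by exact_mod_cast hpos
        rw [Real.log_div (by positivity) (by positivity), Real.log_mul hn0.ne' hm.ne',
          Real.log_mul hk1.ne' hk2.ne']
        field_simp
        ring
    rw [hfull, Finset.mul_sum, Finset.sum_congr rfl fun p _ => hterm p]
    have e1 : ∑ p : X × X, (mm p:ℝ) * Real.log n = (n:ℝ) * Real.log n := by
      rw [← Finset.sum_mul, hsumall]
    have e3 : ∑ p : X × X, (mm p:ℝ) * Real.log (k p.1) = La := by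
      rw [hLa, Fintype.sum_prod_type]
      refine Finset.sum_congr rfl fun a _ => ?_
      simp only [show ∀ u v : X, ((u, v) : X × X).1 = u from fun _ _ => rfl]
      rw [← Finset.sum_mul]
      congr 1
      exact_mod_cast congrArg (Nat.cast : ℕ → ℝ) (hrow a)
    have e4 : ∑ p : X × X, (mm p:ℝ) * Real.log (k p.2) = La := by
      rw [hLa, Fintype.sum_prod_type_right]
      refine Finset.sum_congr rfl fun b _ => ?_
      simp only [show ∀ u v : X, ((u, v) : X × X).2 = v from fun _ _ => rfl]
      rw [← Finset.sum_mul]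
      congr 1
      exact_mod_cast congrArg (Nat.cast : ℕ → ℝ) (hcol b)
    simp only [Finset.sum_sub_distrib, Finset.sum_add_distrib, e1, e3, e4, ← hLm]
  -- upper bound on M
  have hub : (M : ℝ) ≤ Real.exp ((n:ℝ) * Real.log n - La) := by
    have h := multA' k
    rw [hk] at h
    exact h
  -- lower bound on each Ma
  have hlb : ∀ a : X, Real.exp ((k a:ℝ) * Real.log (k a)
        - ∑ b, (mm (a,b):ℝ) * Real.log (mm (a,b)))
      ≤ ((n:ℝ) + 1) ^ c * (Ma a : ℝ) := by
    intro a
    have h := multB' (fun b => mm (a, b))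
    rw [hrow a] at h
    refine h.trans ?_
    have hka : (k a : ℝ) ≤ (n:ℝ) := by
      have : k a ≤ n := by
        rw [← hk]
        exact Finset.single_le_sum (f := k) (fun _ _ => Nat.zero_le _) (mem_univ a)
      exact_mod_cast this
    have hMann : (0:ℝ) ≤ (Ma a : ℝ) := by positivity
    gcongr
  have hprod : Real.exp (La - Lm) ≤ ((n:ℝ)+1)^(c*c) * ∏ a, (Ma a : ℝ) := by
    have hsplit : Real.exp (La - Lm) = ∏ a, Real.exp ((k a:ℝ) * Real.log (k a)
        - ∑ b, (mm (a,b):ℝ) * Real.log (mm (a,b))) := by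
      rw [← Real.exp_sum]
      congr 1
      rw [Finset.sum_sub_distrib, hLa, hLm, Fintype.sum_prod_type]
    rw [hsplit]
    calc ∏ a, Real.exp ((k a:ℝ) * Real.log (k a)
          - ∑ b, (mm (a,b):ℝ) * Real.log (mm (a,b)))
        ≤ ∏ a, (((n:ℝ)+1)^c * (Ma a:ℝ)) :=
          Finset.prod_le_prod (fun a _ => (Real.exp_pos _).le) (fun a _ => hlb a)
      _ = (((n:ℝ)+1)^c)^(Fintype.card X) * ∏ a, (Ma a:ℝ) := by
          rw [Finset.prod_mul_distrib, Finset.prod_const, Finset.card_univ]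
      _ = ((n:ℝ)+1)^(c*c) * ∏ a, (Ma a:ℝ) := by rw [← pow_mul, ← hc]
  have hMpos : (0:ℝ) < (M:ℝ) := by exact_mod_cast Nat.multinomial_pos _ _
  have hPpos : (0:ℝ) < ∏ a, (Ma a:ℝ) :=
    Finset.prod_pos fun a _ => by exact_mod_cast Nat.multinomial_pos _ _
  have hzpow : ((n:ℝ)+1) ^ (-(c ^ 2 : ℤ)) = (((n:ℝ)+1)^(c*c))⁻¹ := by
    rw [zpow_neg]
    congr 1
    rw [show ((c ^ 2 : ℤ)) = ((c*c : ℕ) : ℤ) by push_cast; ring, zpow_natCast]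
  rw [hzpow, hI]
  have hexp : Real.exp (-((n:ℝ) * Real.log n + Lm - La - La))
      = Real.exp (La - Lm) / Real.exp ((n:ℝ) * Real.log n - La) := by
    rw [← Real.exp_sub]
    congr 1
    ring
  rw [hexp]
  have hC2pos : (0:ℝ) < ((n:ℝ)+1)^(c*c) := by positivity
  have hE2pos := Real.exp_pos ((n:ℝ) * Real.log n - La)
  calc (((n:ℝ)+1)^(c*c))⁻¹ *
        (Real.exp (La - Lm) / Real.exp ((n:ℝ) * Real.log n - La))
      ≤ (((n:ℝ)+1)^(c*c))⁻¹ *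
        ((((n:ℝ)+1)^(c*c) * ∏ a, (Ma a:ℝ)) / Real.exp ((n:ℝ) * Real.log n - La)) := by
        gcongr
    _ = (∏ a, (Ma a:ℝ)) / Real.exp ((n:ℝ) * Real.log n - La) := by
        field_simp
    _ ≤ (∏ a, (Ma a:ℝ)) / (M:ℝ) := by
        gcongr
end

section
/- Let 0 < α < π/4 and q ∈ [0,1]. Define g(β) = −2·q·log(cos(α − β)) − 2·(1 − q)·log(cos(α + β)) for β in the open interval (α − π/2, π/2 − α), and set β* = (1/2)·arcsin((2q − 1)·sin(2α)). Then β* lies in the interval (α − π/2, π/2 − α), β* satisfies sin(2β*) = (2q − 1)·sin(2α), and g(β*) ≤ g(β) for every β in the interval; that is, the minimum of g over the interval is attained at the point β* characterized by sin(2β) = (2q − 1)·sin(2α). -/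
/-!
The derivative of `g` is `(sin 2β − (2q − 1) sin 2α) / (cos (α − β) cos (α + β))`, whose
denominator is positive on the interval. Since `|2β*| ≤ 2α` and `|2β| < π − 2α`, we have
`|2β| + |2β*| < π`, so `sin 2β − sin 2β* = 2 sin (β − β*) cos (β + β*)` has the sign of `β − β*`:
`g` decreases up to `β*` and increases after it.
-/

open Real Set

namespace Real

theorem abs_arcsin_mul_sin_le {t θ : ℝ} (ht : |t| ≤ 1) (hθ₀ : 0 ≤ θ) (hθ : θ ≤ π / 2) :
    |arcsin (t * sin θ)| ≤ θ := by
  have hsin : 0 ≤ sin θ := sin_nonneg_of_nonneg_of_le_pi hθ₀ (by linarith [pi_pos])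
  have hy : |t * sin θ| ≤ sin θ := by
    rw [abs_mul, abs_of_nonneg hsin]
    exact mul_le_of_le_one_left hsin ht
  rw [abs_le] at hy ⊢
  constructor
  · calc -θ = arcsin (sin (-θ)) := (arcsin_sin (by linarith) (by linarith)).symm
      _ ≤ arcsin (t * sin θ) := arcsin_le_arcsin (by rw [sin_neg]; exact hy.1)
  · calc arcsin (t * sin θ) ≤ arcsin (sin θ) := arcsin_le_arcsin hy.2
      _ = θ := arcsin_sin (by linarith) hθ

theorem sin_arcsin_mul_sin {t θ : ℝ} (ht : |t| ≤ 1) : sin (arcsin (t * sin θ)) = t * sin θ :=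
  sin_arcsin' (abs_le.1 (by rw [abs_mul]; exact mul_le_one₀ ht (abs_nonneg _) (abs_sin_le_one θ)))

theorem sin_lt_sin_of_lt_of_abs_add_abs_lt {u v : ℝ} (huv : u < v) (h : |u| + |v| < π) :
    sin u < sin v := by
  have hsin : 0 < sin ((v - u) / 2) :=
    sin_pos_of_pos_of_lt_pi (by linarith) (by linarith [le_abs_self v, neg_abs_le u])
  have hcos : 0 < cos ((v + u) / 2) := cos_pos_of_mem_Ioo
    ⟨by linarith [neg_abs_le u, neg_abs_le v], by linarith [le_abs_self u, le_abs_self v]⟩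
  have := sin_sub_sin v u
  nlinarith [mul_pos hsin hcos]

end Real

theorem isMinOn_Ioo_of_hasDerivAt_nonpos_of_nonneg {f f' : ℝ → ℝ} {a b c : ℝ}
    (hac : a < c) (hcb : c < b) (hf : ∀ x ∈ Ioo a b, HasDerivAt f (f' x) x)
    (hleft : ∀ x ∈ Ioo a c, f' x ≤ 0) (hright : ∀ x ∈ Ioo c b, 0 ≤ f' x) :
    IsMinOn f (Ioo a b) c := by
  have hcont : ContinuousOn f (Ioo a b) := fun x hx => (hf x hx).continuousAt.continuousWithinAt
  intro x hx
  rcases le_total x c with hxc | hcx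
  · have hanti : AntitoneOn f (Ioc a c) := by
      refine antitoneOn_of_hasDerivWithinAt_nonpos (convex_Ioc a c)
        (hcont.mono (Ioc_subset_Ioo_right hcb)) ?_ (by rwa [interior_Ioc])
      rw [interior_Ioc]
      exact fun y hy => (hf y ⟨hy.1, hy.2.trans hcb⟩).hasDerivWithinAt
    exact hanti ⟨hx.1, hxc⟩ ⟨hac, le_rfl⟩ hxc
  · have hmono : MonotoneOn f (Ico c b) := by
      refine monotoneOn_of_hasDerivWithinAt_nonneg (convex_Ico c b)
        (hcont.mono (Ico_subset_Ioo_left hac)) ?_ (by rwa [interior_Ico])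
      rw [interior_Ico]
      exact fun y hy => (hf y ⟨hac.trans hy.1, hy.2⟩).hasDerivWithinAt
    exact hmono ⟨le_rfl, hcb⟩ ⟨hcx, hx.2⟩ hcx

theorem hasDerivAt_neg_log_cos_combination {α q x : ℝ} (h₁ : cos (α - x) ≠ 0)
    (h₂ : cos (α + x) ≠ 0) :
    HasDerivAt (fun β => -2 * q * log (cos (α - β)) - 2 * (1 - q) * log (cos (α + β)))
      ((sin (2 * x) - (2 * q - 1) * sin (2 * α)) / (cos (α - x) * cos (α + x))) x := by
  have hsub : HasDerivAt (fun β => cos (α - β)) (sin (α - x)) x := by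
    simpa using ((hasDerivAt_id x).const_sub α).cos
  have hadd : HasDerivAt (fun β => cos (α + β)) (-sin (α + x)) x := by
    simpa using ((hasDerivAt_id x).const_add α).cos
  refine (((hsub.log h₁).const_mul (-2 * q)).sub
    ((hadd.log h₂).const_mul (2 * (1 - q)))).congr_deriv ?_
  field_simp
  rw [sin_sub, cos_sub, sin_add, cos_add, sin_two_mul, sin_two_mul]
  linear_combination (2 * sin x * cos x) * sin_sq_add_cos_sq α +
    ((2 - 4 * q) * sin α * cos α) * sin_sq_add_cos_sq x

theorem isMinOn_neg_log_cos_combination {α q b : ℝ} (hα : α < π / 4) (hb : |b| ≤ α)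
    (hsin : sin (2 * b) = (2 * q - 1) * sin (2 * α)) :
    IsMinOn (fun β => -2 * q * log (cos (α - β)) - 2 * (1 - q) * log (cos (α + β)))
      (Ioo (α - π / 2) (π / 2 - α)) b := by
  have hα₀ : 0 ≤ α := (abs_nonneg b).trans hb
  have hcos : ∀ x ∈ Ioo (α - π / 2) (π / 2 - α), 0 < cos (α - x) ∧ 0 < cos (α + x) :=
    fun x hx => ⟨cos_pos_of_mem_Ioo ⟨by linarith [hx.2], by linarith [hx.1]⟩,
      cos_pos_of_mem_Ioo ⟨by linarith [hx.1], by linarith [hx.2]⟩⟩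
  have hsum : ∀ x ∈ Ioo (α - π / 2) (π / 2 - α), |2 * x| + |2 * b| < π := fun x hx => by
    have hx' : |2 * x| < π - 2 * α := abs_lt.2 ⟨by linarith [hx.1], by linarith [hx.2]⟩
    rw [abs_mul 2 b, abs_two]
    linarith
  rw [abs_le] at hb
  have hb₁ : α - π / 2 < b := by linarith
  have hb₂ : b < π / 2 - α := by linarith
  refine isMinOn_Ioo_of_hasDerivAt_nonpos_of_nonneg hb₁ hb₂
    (fun x hx => hasDerivAt_neg_log_cos_combination (hcos x hx).1.ne' (hcos x hx).2.ne')
    (fun x hx => ?_) (fun x hx => ?_)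
  · have hxI := Ioo_subset_Ioo_right hb₂.le hx
    refine div_nonpos_of_nonpos_of_nonneg ?_ (mul_pos (hcos x hxI).1 (hcos x hxI).2).le
    rw [← hsin, sub_nonpos]
    exact (sin_lt_sin_of_lt_of_abs_add_abs_lt (by linarith [hx.2]) (hsum x hxI)).le
  · have hxI := Ioo_subset_Ioo_left hb₁.le hx
    refine div_nonneg ?_ (mul_pos (hcos x hxI).1 (hcos x hxI).2).le
    rw [← hsin, sub_nonneg]
    exact (sin_lt_sin_of_lt_of_abs_add_abs_lt (by linarith [hx.1])
      ((add_comm _ _).trans_lt (hsum x hxI))).le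

/-- The minimum of `g(β) = −2q log cos(α−β) − 2(1−q) log cos(α+β)` over the interval
`(α − π/2, π/2 − α)` is attained at the point `β* = (1/2) arcsin((2q−1) sin 2α)`,
characterized by `sin 2β = (2q − 1) sin 2α`. -/
theorem stmt10 (α : ℝ) (hα1 : 0 < α) (hα2 : α < Real.pi / 4)
    (q : ℝ) (hq0 : 0 ≤ q) (hq1 : q ≤ 1) :
    let g : ℝ → ℝ := fun β =>
      -2 * q * Real.log (Real.cos (α - β)) - 2 * (1 - q) * Real.log (Real.cos (α + β))
    let βs : ℝ := (1 / 2) * Real.arcsin ((2 * q - 1) * Real.sin (2 * α))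
    α - Real.pi / 2 < βs ∧ βs < Real.pi / 2 - α ∧
      Real.sin (2 * βs) = (2 * q - 1) * Real.sin (2 * α) ∧
      ∀ β : ℝ, α - Real.pi / 2 < β → β < Real.pi / 2 - α → g βs ≤ g β := by
  intro g βs
  have hq : |2 * q - 1| ≤ 1 := abs_le.2 ⟨by linarith, by linarith⟩
  have h2βs : 2 * βs = arcsin ((2 * q - 1) * sin (2 * α)) := by ring
  have hβs : |βs| ≤ α := by
    have := abs_arcsin_mul_sin_le hq (θ := 2 * α) (by linarith) (by linarith)
    rw [← h2βs, abs_mul, abs_two] at this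
    linarith
  have hsin2βs : sin (2 * βs) = (2 * q - 1) * sin (2 * α) := by
    rw [h2βs]; exact sin_arcsin_mul_sin hq
  have hmin := isMinOn_neg_log_cos_combination hα2 hβs hsin2βs
  rw [abs_le] at hβs
  exact ⟨by linarith, by linarith, hsin2βs, fun β hβ₁ hβ₂ => hmin ⟨hβ₁, hβ₂⟩⟩
end

section
/- Let Z > 0 and λ ∈ (0,1). For ρ ≥ 1 define α(ρ) = (1/2)·arccos(e^{−Z/ρ}), β(ρ) = (1/2)·arcsin((1 − 2λ)·sin(2·α(ρ))), and θ(ρ) = −2·(1 − λ)·log(cos(α(ρ) − β(ρ))) − 2·λ·log(cos(α(ρ) + β(ρ))). Then ρ·θ(ρ) tends to 2·λ·(1 − λ)·Z as ρ → ∞. -/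
/-!
With `c = cos 2α = e^{-x}` and `x = Z/ρ`, the double-angle formulas turn `cos²(α ∓ β)` into
algebraic functions of `c` (`cosSqClosedForm`), so `θ` becomes a function of `x` that is smooth
at `x = 0`, vanishes there and has derivative `2λ(1-λ)`. Hence `ρ·θ = Z · (θ(Z/ρ) - θ(0)) / (Z/ρ)`
tends to `2λ(1-λ)Z`.
-/

open Real Filter Topology

/-- `cos²(α - β)` when `cos 2α = c`, `sin 2α ≥ 0` and `sin 2β = s · sin 2α`. -/
noncomputable def cosSqClosedForm (s c : ℝ) : ℝ :=
  (1 + c * √(1 - s ^ 2 * (1 - c ^ 2)) + s * (1 - c ^ 2)) / 2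

/-- `θ` as a function of `x = Z/ρ`. -/
noncomputable def binaryTheta (lam x : ℝ) : ℝ :=
  -(1 - lam) * log (cosSqClosedForm (1 - 2 * lam) (exp (-x)))
    - lam * log (cosSqClosedForm (-(1 - 2 * lam)) (exp (-x)))

theorem cos_sub_sq_eq_cosSqClosedForm {s c α β : ℝ} (hc₁ : -1 ≤ c) (hc₂ : c ≤ 1) (hs : |s| ≤ 1)
    (hα : 2 * α = arccos c) (hβ : 2 * β = arcsin (s * sin (2 * α))) :
    cos (α - β) ^ 2 = cosSqClosedForm s c := by
  have hc : 0 ≤ 1 - c ^ 2 := by nlinarith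
  have hsin2α : sin (2 * α) = √(1 - c ^ 2) := by rw [hα, sin_arccos]
  have hcos2α : cos (2 * α) = c := by rw [hα, cos_arccos hc₁ hc₂]
  have ht : |s * √(1 - c ^ 2)| ≤ 1 := by
    rw [abs_mul, abs_of_nonneg (sqrt_nonneg _)]
    exact mul_le_one₀ hs (sqrt_nonneg _) (sqrt_le_one.mpr (by nlinarith [sq_nonneg c]))
  have hsin2β : sin (2 * β) = s * √(1 - c ^ 2) := by
    rw [hβ, hsin2α, sin_arcsin (abs_le.mp ht).1 (abs_le.mp ht).2]
  have hcos2β : cos (2 * β) = √(1 - s ^ 2 * (1 - c ^ 2)) := by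
    rw [hβ, hsin2α, cos_arcsin, mul_pow, sq_sqrt hc]
  rw [cos_sq, show 2 * (α - β) = 2 * α - 2 * β by ring, cos_sub, hcos2α, hsin2α, hcos2β, hsin2β,
    cosSqClosedForm]
  linear_combination (s / 2) * mul_self_sqrt hc

/-- Flipping the sign of `s` flips the sign of `β`, so the `α + β` case is the `α - β` case
with `-s`. -/
theorem cos_add_sq_eq_cosSqClosedForm {s c α β : ℝ} (hc₁ : -1 ≤ c) (hc₂ : c ≤ 1) (hs : |s| ≤ 1)
    (hα : 2 * α = arccos c) (hβ : 2 * β = arcsin (s * sin (2 * α))) :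
    cos (α + β) ^ 2 = cosSqClosedForm (-s) c := by
  rw [← sub_neg_eq_add]
  refine cos_sub_sq_eq_cosSqClosedForm hc₁ hc₂ (by rwa [abs_neg]) hα ?_
  rw [neg_mul, arcsin_neg, ← hβ]
  ring

theorem cosSqClosedForm_one (s : ℝ) : cosSqClosedForm s 1 = 1 := by
  simp [cosSqClosedForm]

theorem hasDerivAt_cosSqClosedForm_one (s : ℝ) :
    HasDerivAt (cosSqClosedForm s) ((1 - s) ^ 2 / 2) 1 := by
  have hu : HasDerivAt (fun c : ℝ => 1 - s ^ 2 * (1 - c ^ 2)) (2 * s ^ 2) 1 := by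
    refine ((((hasDerivAt_pow 2 (1 : ℝ)).const_sub 1).const_mul (s ^ 2)).const_sub 1).congr_deriv ?_
    ring
  have hw := hu.sqrt (by norm_num)
  refine ((((hasDerivAt_id (1 : ℝ)).mul hw).const_add 1).add
    (((hasDerivAt_pow 2 (1 : ℝ)).const_sub 1).const_mul s)).div_const 2 |>.congr_deriv ?_
  norm_num
  ring

theorem binaryTheta_zero (lam : ℝ) : binaryTheta lam 0 = 0 := by
  simp [binaryTheta, cosSqClosedForm_one]

theorem hasDerivAt_log_cosSqClosedForm_exp_neg (s : ℝ) :
    HasDerivAt (fun x => log (cosSqClosedForm s (exp (-x)))) (-((1 - s) ^ 2 / 2)) 0 := by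
  have hexp : HasDerivAt (fun x : ℝ => exp (-x)) (-1) 0 := by
    simpa using (hasDerivAt_neg (0 : ℝ)).exp
  have hq : HasDerivAt (cosSqClosedForm s) ((1 - s) ^ 2 / 2) (exp (-0)) := by
    simpa using hasDerivAt_cosSqClosedForm_one s
  refine ((hq.comp 0 hexp).log (by simp [cosSqClosedForm_one])).congr_deriv ?_
  simp [cosSqClosedForm_one]

theorem hasDerivAt_binaryTheta_zero (lam : ℝ) :
    HasDerivAt (binaryTheta lam) (2 * lam * (1 - lam)) 0 := by
  refine (((hasDerivAt_log_cosSqClosedForm_exp_neg (1 - 2 * lam)).const_mul (-(1 - lam))).sub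
    ((hasDerivAt_log_cosSqClosedForm_exp_neg (-(1 - 2 * lam))).const_mul lam)).congr_deriv ?_
  ring

theorem theta_eq_binaryTheta {lam x : ℝ} (hlam₀ : 0 ≤ lam) (hlam₁ : lam ≤ 1) (hx : 0 ≤ x) :
    (let α : ℝ := (1 / 2) * arccos (exp (-x))
     let β : ℝ := (1 / 2) * arcsin ((1 - 2 * lam) * sin (2 * α))
     (-2 * (1 - lam) * log (cos (α - β)) - 2 * lam * log (cos (α + β)))) = binaryTheta lam x := by
  extract_lets α β
  have hc₁ : -1 ≤ exp (-x) := by linarith [exp_pos (-x)]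
  have hc₂ : exp (-x) ≤ 1 := exp_le_one_iff.mpr (by linarith)
  have hs : |1 - 2 * lam| ≤ 1 := abs_le.mpr ⟨by linarith, by linarith⟩
  have hα : 2 * α = arccos (exp (-x)) := by ring
  have hβ : 2 * β = arcsin ((1 - 2 * lam) * sin (2 * α)) := by ring
  rw [binaryTheta, ← cos_sub_sq_eq_cosSqClosedForm hc₁ hc₂ hs hα hβ,
    ← cos_add_sq_eq_cosSqClosedForm hc₁ hc₂ hs hα hβ, log_pow, log_pow]
  push_cast
  ring

theorem tendsto_mul_comp_div_atTop {f : ℝ → ℝ} {f' : ℝ} (Z : ℝ) (hf₀ : f 0 = 0)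
    (hf : HasDerivAt f f' 0) : Tendsto (fun ρ => ρ * f (Z / ρ)) atTop (𝓝 (f' * Z)) := by
  rcases eq_or_ne Z 0 with rfl | hZ
  · simp [hf₀]
  have hZρ : Tendsto (fun ρ : ℝ => Z / ρ) atTop (𝓝[≠] 0) := by
    refine tendsto_nhdsWithin_iff.mpr ⟨tendsto_const_nhds.div_atTop tendsto_id, ?_⟩
    filter_upwards [eventually_ne_atTop 0] with ρ hρ using div_ne_zero hZ hρ
  refine (((hasDerivAt_iff_tendsto_slope.mp hf).comp hZρ).mul_const Z).congr' ?_
  filter_upwards [eventually_ne_atTop 0] with ρ hρ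
  simp only [Function.comp_apply, slope_def_field, hf₀, sub_zero]
  field_simp

/-- Asymptotics of the binary umbrella bound: with `α(ρ) = (1/2) arccos(e^{−Z/ρ})`,
`β(ρ) = (1/2) arcsin((1−2λ) sin 2α(ρ))` and
`θ(ρ) = −2(1−λ) log cos(α−β) − 2λ log cos(α+β)`, one has
`ρ·θ(ρ) → 2λ(1−λ)Z` as `ρ → ∞`. -/
theorem stmt11 (Z lam : ℝ) (hZ : 0 < Z) (hlam0 : 0 < lam) (hlam1 : lam < 1) :
    Filter.Tendsto
      (fun ρ : ℝ =>
        ρ * (let α : ℝ := (1 / 2) * Real.arccos (Real.exp (-Z / ρ))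
             let β : ℝ := (1 / 2) * Real.arcsin ((1 - 2 * lam) * Real.sin (2 * α))
             (-2 * (1 - lam) * Real.log (Real.cos (α - β))
               - 2 * lam * Real.log (Real.cos (α + β)))))
      Filter.atTop (nhds (2 * lam * (1 - lam) * Z)) := by
  refine (tendsto_mul_comp_div_atTop Z (binaryTheta_zero lam)
    (hasDerivAt_binaryTheta_zero lam)).congr' ?_
  filter_upwards [eventually_gt_atTop 0] with ρ hρ
  rw [neg_div, theta_eq_binaryTheta hlam0.le hlam1.le (div_pos hZ hρ).le]
end

section
/- Let d ≥ 1, M ≥ 1, and let p_1, …, p_M be points in ℝ^d (Euclidean space). Then there exist unit vectors v_1, …, v_M in EuclideanSpace ℝ (Fin M) such that ⟨v_i, v_j⟩ = exp(−‖p_i − p_j‖²) for all i, j; in other words, there is a set of unit norm vectors whose pairwise Bhattacharyya distances −log⟨v_i, v_j⟩ are precisely the squared Euclidean distances ‖p_i − p_j‖² between the original points. -/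
/-!
Expanding `‖x - y‖² = ‖x‖² - 2⟪x, y⟫ + ‖y‖²` writes the Gaussian kernel
`exp (-‖pᵢ - pⱼ‖²)` as the Hadamard product of the rank-one matrix `wᵢ wⱼ`, where
`wᵢ = exp (-‖pᵢ‖²)`, with the entrywise exponential of `2 • gram p`. By the Schur product
theorem Hadamard powers of a positive semidefinite matrix stay positive semidefinite, so the
exponential series shows that the entrywise exponential does too; hence the kernel matrix is
positive semidefinite. Every positive semidefinite `M × M` matrix is `BᴴB`, i.e. the Gram
matrix of the columns of `B` in `ℝ^M`, and these columns are unit vectors because the kernel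
has ones on the diagonal.
-/

open scoped ComplexOrder

namespace Matrix

section RCLike

variable {𝕜 n : Type*} [RCLike 𝕜] [Fintype n]

open scoped MatrixOrder in
theorem PosSemidef.exists_gram_eq {A : Matrix n n 𝕜} (hA : A.PosSemidef) :
    ∃ v : n → EuclideanSpace 𝕜 n, gram 𝕜 v = A := by
  classical
  obtain ⟨B, rfl⟩ := CStarAlgebra.nonneg_iff_eq_star_mul_self.mp hA.nonneg
  exact ⟨fun j ↦ WithLp.toLp 2 fun i ↦ B i j,
    gram_eq_conjTranspose_mul (EuclideanSpace.basisFun n 𝕜) _⟩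

theorem PosSemidef.map_pow {A : Matrix n n 𝕜} (hA : A.PosSemidef) (k : ℕ) :
    (A.map (· ^ k)).PosSemidef := by
  induction k with
  | zero =>
    convert posSemidef_vecMulVec_self_star (fun _ : n ↦ (1 : 𝕜)) using 1
    ext
    simp [vecMulVec]
  | succ k ih =>
    have hsucc : A.map (· ^ (k + 1)) = A.map (· ^ k) ⊙ A := by
      ext
      simp [pow_succ]
    exact hsucc ▸ ih.hadamard hA

end RCLike

theorem PosSemidef.map_exp {n : Type*} [Fintype n] {A : Matrix n n ℝ} (hA : A.PosSemidef) :
    (A.map Real.exp).PosSemidef := by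
  refine .of_dotProduct_mulVec_nonneg (hA.isHermitian.map _ fun _ ↦ rfl) fun x ↦ ?_
  have hexp (i j : n) : HasSum (fun k : ℕ ↦ A i j ^ k / k.factorial) (Real.exp (A i j)) := by
    rw [Real.exp_eq_exp_ℝ]
    exact NormedSpace.expSeries_div_hasSum_exp (A i j)
  have hquad : HasSum (fun k : ℕ ↦ (k.factorial : ℝ)⁻¹ * (star x ⬝ᵥ (A.map (· ^ k) *ᵥ x)))
      (star x ⬝ᵥ (A.map Real.exp *ᵥ x)) := by
    have h := hasSum_sum (s := .univ) fun i _ ↦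
      (hasSum_sum (s := .univ) fun j _ ↦ (hexp i j).mul_right (x j)).mul_left (x i)
    simp only [dotProduct, mulVec, map_apply, star_trivial, Finset.mul_sum] at h ⊢
    refine h.congr_fun fun k ↦ ?_
    exact Finset.sum_congr rfl fun _ _ ↦ Finset.sum_congr rfl fun _ _ ↦ by ring
  exact hquad.nonneg fun k ↦
    mul_nonneg (by positivity) ((hA.map_pow k).dotProduct_mulVec_nonneg x)

theorem posSemidef_exp_neg_norm_sub_sq {ι E : Type*} [Fintype ι] [NormedAddCommGroup E]
    [InnerProductSpace ℝ E] (p : ι → E) :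
    (of fun i j ↦ Real.exp (-‖p i - p j‖ ^ 2)).PosSemidef := by
  set w : ι → ℝ := fun i ↦ Real.exp (-‖p i‖ ^ 2)
  have hsplit : of (fun i j ↦ Real.exp (-‖p i - p j‖ ^ 2))
      = vecMulVec w (star w) ⊙ (2 • gram ℝ p).map Real.exp := by
    ext i j
    simp only [of_apply, hadamard_apply, vecMulVec_apply, star_trivial, map_apply, smul_apply,
      gram_apply, w, ← Real.exp_add, norm_sub_sq_real]
    ring_nf
  rw [hsplit]
  exact (posSemidef_vecMulVec_self_star w).hadamard
    ((posSemidef_gram ℝ p).smul zero_le_two).map_exp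

end Matrix

theorem stmt14_general (d M : ℕ)
    (p : Fin M → EuclideanSpace ℝ (Fin d)) :
    ∃ v : Fin M → EuclideanSpace ℝ (Fin M),
      (∀ i, ‖v i‖ = 1) ∧
      ∀ i j, (inner ℝ (v i) (v j) : ℝ) = Real.exp (-‖p i - p j‖ ^ 2) := by
  obtain ⟨v, hv⟩ := (Matrix.posSemidef_exp_neg_norm_sub_sq p).exists_gram_eq
  have hinner (i j : Fin M) : inner ℝ (v i) (v j) = Real.exp (-‖p i - p j‖ ^ 2) :=
    congrFun₂ hv i j
  refine ⟨v, fun i ↦ ?_, hinner⟩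
  rw [← pow_eq_one_iff_of_nonneg (norm_nonneg _) two_ne_zero, ← real_inner_self_eq_norm_sq,
    hinner]
  simp

/-- For any points `p₁, …, p_M` in Euclidean space there are unit vectors
`v₁, …, v_M ∈ ℝ^M` with `⟨vᵢ, vⱼ⟩ = exp(−‖pᵢ − pⱼ‖²)`, i.e. whose pairwise
Bhattacharyya distances `−log⟨vᵢ, vⱼ⟩` are the squared Euclidean distances. -/
theorem stmt14 (d M : ℕ) (hd : 1 ≤ d) (hM : 1 ≤ M)
    (p : Fin M → EuclideanSpace ℝ (Fin d)) :
    ∃ v : Fin M → EuclideanSpace ℝ (Fin M),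
      (∀ i, ‖v i‖ = 1) ∧
      ∀ i j, (inner ℝ (v i) (v j) : ℝ) = Real.exp (-‖p i - p j‖ ^ 2) :=
  stmt14_general d M p
end
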